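/- arXiv:1607.00328 — 11 statements merged into one kernel-verified Lean document; each statement's English description precedes it below -/
import Mathlib

section
/- If a locally finite extended metric space X admits two disjoint subsets X'₊, X'₋ ⊆ X and partial translations t'₊ : X → X'₊ and t'₋ : X → X'₋ (bijections onto their images with controlled graphs, defined on all of X), then X admits a paradoxical decomposition: a partition X = X₊ ⊔ X₋ together with partial translations t₊ : X → X₊ and t₋ : X → X₋ defined on all of X. -/
open Set

/-- An extended metric space is locally finite if every set of finite diameter
(every closed ball of finite radius) is finite. -/
def LocallyFiniteEMS (X : Type*) [EMetricSpace X] : Prop :=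
  ∀ (x : X) (R : ℝ), {y : X | edist x y ≤ ENNReal.ofReal R}.Finite

/-- The `R`-boundary of a set `F` in an extended metric space. -/
def rBoundary {X : Type*} [EMetricSpace X] (R : ℝ) (F : Set X) : Set X :=
  {x : X | (∃ y ∈ F, edist x y ≤ ENNReal.ofReal R) ∧
           (∃ y ∉ F, edist x y ≤ ENNReal.ofReal R)}

/-- `F` is an `(R, ε)`-Følner set: finite, nonempty, with `|∂_R F| ≤ ε·|F|`. -/
def IsFolnerSet {X : Type*} [EMetricSpace X] (R ε : ℝ) (F : Set X) : Prop :=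
  F.Finite ∧ F.Nonempty ∧ ((rBoundary R F).ncard : ℝ) ≤ ε * F.ncard

/-- Amenability of an extended metric space. -/
def Amenable (X : Type*) [EMetricSpace X] : Prop :=
  ∀ R > (0:ℝ), ∀ ε > (0:ℝ), ∃ F : Set X, IsFolnerSet R ε F

/-- Proper amenability of an extended metric space. -/
def ProperlyAmenable (X : Type*) [EMetricSpace X] : Prop :=
  ∀ R > (0:ℝ), ∀ ε > (0:ℝ), ∀ A : Set X, A.Finite →
    ∃ F : Set X, IsFolnerSet R ε F ∧ A ⊆ F

/-- `t` is a partial translation with domain `A` and range `B`: a bijection from `A`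
onto `B` whose graph is controlled, i.e. `sup_{x ∈ A} d(x, t x) < ∞`. -/
def IsPartialTranslation {X : Type*} [EMetricSpace X] (A B : Set X) (t : X → X) : Prop :=
  Set.BijOn t A B ∧ ∃ C : ℝ, ∀ x ∈ A, edist x (t x) ≤ ENNReal.ofReal C

/-- A paradoxical decomposition of `X`: a partition `X = X₊ ⊔ X₋` together with partial
translations `t₊ : X → X₊`, `t₋ : X → X₋` defined on all of `X`. -/
def Paradoxical (X : Type*) [EMetricSpace X] : Prop :=
  ∃ (Xp Xm : Set X) (tp tm : X → X),
    Xp ∪ Xm = Set.univ ∧ Disjoint Xp Xm ∧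
    IsPartialTranslation Set.univ Xp tp ∧ IsPartialTranslation Set.univ Xm tm

theorem stmt1 {X : Type*} [EMetricSpace X] (hlf : LocallyFiniteEMS X)
    (Xp' Xm' : Set X) (hdisj : Disjoint Xp' Xm') (tp' tm' : X → X)
    (hp : IsPartialTranslation Set.univ Xp' tp')
    (hm : IsPartialTranslation Set.univ Xm' tm') :
    Paradoxical X := by
  classical
  obtain ⟨hbij_p, Cp, hCp⟩ := hp
  have hinj : Function.Injective tp' := fun a b h =>
    hbij_p.injOn (mem_univ a) (mem_univ b) h
  have hrange : ∀ x, tp' x ∈ Xp' := fun x => hbij_p.mapsTo (mem_univ x)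
  have hsub : Xp' ⊆ Xm'ᶜ := hdisj.subset_compl_right
  set S : Set X := ⋃ n : ℕ, tp'^[n] '' Xm' with hSdef
  have hS0 : Xm' ⊆ S := fun x hx => mem_iUnion.2 ⟨0, by simpa using hx⟩
  have hSstep : ∀ x ∈ S, tp' x ∈ S := by
    intro x hx
    obtain ⟨n, z, hz, rfl⟩ : ∃ n, ∃ z ∈ Xm', tp'^[n] z = x := by
      simpa [hSdef, mem_iUnion] using hx
    exact mem_iUnion.2 ⟨n + 1, z, hz, (Function.iterate_succ_apply' tp' n z)⟩
  set tp : X → X := fun x => if x ∈ S then tp' x else x with htp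
  refine ⟨Xm'ᶜ, Xm', tp, tm', by simp, disjoint_compl_left, ⟨⟨?_, ?_, ?_⟩, ?_⟩, hm⟩
  · -- MapsTo
    intro x _
    by_cases hx : x ∈ S
    · simpa only [htp, if_pos hx] using hsub (hrange x)
    · simp only [htp, if_neg hx]
      exact fun hmem => hx (hS0 hmem)
  · -- InjOn
    intro a _ b _ hab
    simp only [htp] at hab
    by_cases ha : a ∈ S <;> by_cases hb : b ∈ S
    · rw [if_pos ha, if_pos hb] at hab; exact hinj hab
    · rw [if_pos ha, if_neg hb] at hab; exact absurd (hab ▸ hSstep a ha) hb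
    · rw [if_neg ha, if_pos hb] at hab; exact absurd (hab ▸ hSstep b hb) ha
    · rwa [if_neg ha, if_neg hb] at hab
  · -- SurjOn
    intro y hy
    by_cases hyS : y ∈ S
    · obtain ⟨n, z, hz, hzy⟩ : ∃ n, ∃ z ∈ Xm', tp'^[n] z = y := by
        simpa [hSdef, mem_iUnion] using hyS
      cases n with
      | zero => exact absurd (show y ∈ Xm' from hzy ▸ hz) hy
      | succ m =>
        refine ⟨tp'^[m] z, mem_univ _, ?_⟩
        have hmem : tp'^[m] z ∈ S := mem_iUnion.2 ⟨m, z, hz, rfl⟩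
        simp only [htp, if_pos hmem]
        rw [← Function.iterate_succ_apply' tp' m z]; exact hzy
    · exact ⟨y, mem_univ _, by simp [htp, hyS]⟩
  · -- control
    refine ⟨max Cp 0, fun x _ => ?_⟩
    by_cases hx : x ∈ S
    · simp only [htp, if_pos hx]
      exact (hCp x (mem_univ x)).trans (ENNReal.ofReal_le_ofReal (le_max_left _ _))
    · simp [htp, if_neg hx]
end

section
/- A locally finite extended metric space X which is not amenable admits a paradoxical decomposition. -/
/-!
Non-amenability provides `R, ε > 0` admitting no `(R, ε)`-Følner set. For finite `H` the
`R`-boundary of `nbhd R H` misses `H` and lies in `nbhd R (nbhd R H)`, so this double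
neighbourhood has more than `|H| + ε |F|` points for any nonempty `F ⊆ H`. Iterating `m ≥ 1/ε`
times, every finite `F` satisfies `2 |F| ≤ |nbhd r F|` with `r = 2 m R`. Hall's marriage theorem
then assigns to each point two private points within distance `r`: an injection `X ⊕ X → X` of
bounded displacement. Schröder–Bernstein against `Sum.inl` turns it into a bijection which is
still of bounded displacement (a point of `X ⊕ X` goes either where the injection sends it or to
itself), and its restrictions to the two copies of `X` are the translations `t₊` and `t₋`.
-/

open Set

section

variable {X : Type*} [EMetricSpace X]

def nbhd (R : ℝ) (F : Set X) : Set X := ⋃ x ∈ F, {y | edist x y ≤ ENNReal.ofReal R}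

theorem subset_nbhd (R : ℝ) (F : Set X) : F ⊆ nbhd R F :=
  fun x hx => mem_biUnion hx (by simp)

theorem nbhd_mono (R : ℝ) {F G : Set X} (h : F ⊆ G) : nbhd R F ⊆ nbhd R G :=
  biUnion_subset_biUnion_left h

theorem nbhd_nbhd_subset {R S : ℝ} (hR : 0 ≤ R) (hS : 0 ≤ S) (F : Set X) :
    nbhd R (nbhd S F) ⊆ nbhd (S + R) F := by
  simp only [nbhd, iUnion_subset_iff, mem_iUnion]
  rintro z ⟨x, hx, hxz⟩ y hzy
  refine mem_biUnion hx ?_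
  calc edist x y ≤ edist x z + edist z y := edist_triangle _ _ _
    _ ≤ ENNReal.ofReal S + ENNReal.ofReal R := add_le_add hxz hzy
    _ = ENNReal.ofReal (S + R) := (ENNReal.ofReal_add hS hR).symm

theorem finite_nbhd (hlf : LocallyFiniteEMS X) (R : ℝ) {F : Set X} (hF : F.Finite) :
    (nbhd R F).Finite :=
  hF.biUnion fun x _ => hlf x R

theorem ncard_add_ncard_rBoundary_le (hlf : LocallyFiniteEMS X) (R : ℝ) {H : Set X}
    (hH : H.Finite) :
    (rBoundary R (nbhd R H)).ncard + H.ncard ≤ (nbhd R (nbhd R H)).ncard := by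
  have hNN := finite_nbhd hlf R (finite_nbhd hlf R hH)
  have hsub : rBoundary R (nbhd R H) ⊆ nbhd R (nbhd R H) \ H := by
    rintro x ⟨⟨y, hy, hxy⟩, ⟨z, hz, hxz⟩⟩
    exact ⟨mem_biUnion hy (by simpa [edist_comm] using hxy), fun hxH => hz (mem_biUnion hxH hxz)⟩
  calc (rBoundary R (nbhd R H)).ncard + H.ncard
      ≤ (nbhd R (nbhd R H) \ H).ncard + H.ncard :=
        Nat.add_le_add_right (ncard_le_ncard hsub hNN.sdiff) _
    _ = (nbhd R (nbhd R H)).ncard :=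
        ncard_sdiff_add_ncard_of_subset ((subset_nbhd R H).trans (subset_nbhd R _)) hNN

theorem ncard_add_le_ncard_nbhd_nbhd {R ε : ℝ} (hlf : LocallyFiniteEMS X)
    (hfol : ∀ F : Set X, ¬ IsFolnerSet R ε F) (hε : 0 ≤ ε) {F H : Set X} (hF : F.Nonempty)
    (hFH : F ⊆ H) (hH : H.Finite) :
    ε * F.ncard + H.ncard ≤ (nbhd R (nbhd R H)).ncard := by
  have hN := finite_nbhd hlf R hH
  have hFN : F ⊆ nbhd R H := hFH.trans (subset_nbhd R H)
  have hbd : ε * (nbhd R H).ncard < (rBoundary R (nbhd R H)).ncard :=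
    lt_of_not_ge fun h => hfol _ ⟨hN, hF.mono hFN, h⟩
  have hcard : ((rBoundary R (nbhd R H)).ncard : ℝ) + H.ncard ≤ (nbhd R (nbhd R H)).ncard := by
    exact_mod_cast ncard_add_ncard_rBoundary_le hlf R hH
  have hFN' : ε * F.ncard ≤ ε * (nbhd R H).ncard :=
    mul_le_mul_of_nonneg_left (by exact_mod_cast ncard_le_ncard hFN hN) hε
  linarith

theorem ncard_add_le_ncard_nbhd {R ε : ℝ} (hlf : LocallyFiniteEMS X)
    (hfol : ∀ F : Set X, ¬ IsFolnerSet R ε F) (hR : 0 ≤ R) (hε : 0 ≤ ε) {F : Set X}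
    (hF : F.Finite) (hne : F.Nonempty) (i : ℕ) :
    i * (ε * F.ncard) + F.ncard ≤ (nbhd (2 * i * R) F).ncard := by
  induction i with
  | zero =>
    simpa using ncard_le_ncard (subset_nbhd _ F) (finite_nbhd hlf _ hF)
  | succ i ih =>
    set H := nbhd (2 * i * R) F
    have hsub : nbhd R (nbhd R H) ⊆ nbhd (2 * (i + 1 : ℕ) * R) F := calc
      nbhd R (nbhd R H) ⊆ nbhd R (nbhd (2 * i * R + R) F) :=
        nbhd_mono R (nbhd_nbhd_subset hR (by positivity) F)
      _ ⊆ nbhd (2 * i * R + R + R) F := nbhd_nbhd_subset hR (by positivity) F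
      _ = nbhd (2 * (i + 1 : ℕ) * R) F := by push_cast; ring_nf
    have hstep := ncard_add_le_ncard_nbhd_nbhd hlf hfol hε hne (subset_nbhd (2 * i * R) F)
      (finite_nbhd hlf (2 * i * R) hF)
    have hmono : ((nbhd R (nbhd R H)).ncard : ℝ) ≤ (nbhd (2 * (i + 1 : ℕ) * R) F).ncard := by
      exact_mod_cast ncard_le_ncard hsub (finite_nbhd hlf _ hF)
    push_cast at hmono ⊢
    linarith

theorem exists_two_mul_ncard_le_ncard_nbhd (hlf : LocallyFiniteEMS X) (hna : ¬ Amenable X) :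
    ∃ r : ℝ, ∀ F : Set X, F.Finite → 2 * F.ncard ≤ (nbhd r F).ncard := by
  simp only [Amenable, not_forall, not_exists, exists_prop] at hna
  obtain ⟨R, hR, ε, hε, hfol⟩ := hna
  obtain ⟨m, hm⟩ := exists_nat_ge ε⁻¹
  have hmε : 1 ≤ (m : ℝ) * ε := by rwa [← inv_le_iff_one_le_mul₀ hε]
  refine ⟨2 * m * R, fun F hF => ?_⟩
  rcases F.eq_empty_or_nonempty with rfl | hne
  · simp
  have hgrowth := ncard_add_le_ncard_nbhd hlf hfol hR.le hε.le hF hne m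
  have hF0 : (0 : ℝ) ≤ F.ncard := Nat.cast_nonneg _
  have : (2 * F.ncard : ℝ) ≤ (nbhd (2 * m * R) F).ncard := by nlinarith
  exact_mod_cast this

theorem exists_injective_sum_of_two_mul_ncard_le (hlf : LocallyFiniteEMS X) {r : ℝ}
    (hdbl : ∀ F : Set X, F.Finite → 2 * F.ncard ≤ (nbhd r F).ncard) :
    ∃ f : X ⊕ X → X, Function.Injective f ∧
      ∀ i, edist (Sum.elim id id i) (f i) ≤ ENNReal.ofReal r := by
  classical
  let t : X ⊕ X → Finset X := fun i => (hlf (Sum.elim id id i) r).toFinset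
  -- Hall's condition for the bipartite graph joining `i` to the points within `r` of it
  have hall : ∀ s : Finset (X ⊕ X), s.card ≤ (s.biUnion t).card := by
    intro s
    set F := s.image (Sum.elim id id)
    have hcoe : (↑(s.biUnion t) : Set X) = nbhd r ↑F := by
      simp only [t, F, nbhd, Finset.coe_biUnion, Finset.coe_image, biUnion_image,
        Set.Finite.coe_toFinset]
    calc s.card ≤ (F.disjSum F).card := by
          refine Finset.card_le_card fun i hi => ?_
          cases i
          exacts [Finset.inl_mem_disjSum.2 (Finset.mem_image_of_mem _ hi),
            Finset.inr_mem_disjSum.2 (Finset.mem_image_of_mem _ hi)]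
      _ = 2 * F.card := by rw [Finset.card_disjSum, two_mul]
      _ ≤ (nbhd r (F : Set X)).ncard := ncard_coe_finset F ▸ hdbl F F.finite_toSet
      _ = (s.biUnion t).card := by rw [← hcoe, ncard_coe_finset]
  obtain ⟨f, hf, hft⟩ := (Finset.all_card_le_biUnion_card_iff_exists_injective t).1 hall
  exact ⟨f, hf, fun i => by simpa [t] using hft i⟩

theorem paradoxical_of_injective_sum {f : X ⊕ X → X} (hf : Function.Injective f) {C : ℝ}
    (hfC : ∀ i, edist (Sum.elim id id i) (f i) ≤ ENNReal.ofReal C) : Paradoxical X := by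
  obtain ⟨h, hh, hhC⟩ := Function.Embedding.schroeder_bernstein_of_rel hf Sum.inl_injective
    (fun i y => edist (Sum.elim id id i) y ≤ ENNReal.ofReal C) hfC (fun y => by simp)
  have hinl : Function.Injective (h ∘ Sum.inl) := hh.1.comp Sum.inl_injective
  have hinr : Function.Injective (h ∘ Sum.inr) := hh.1.comp Sum.inr_injective
  refine ⟨h ∘ Sum.inl '' univ, h ∘ Sum.inr '' univ, h ∘ Sum.inl, h ∘ Sum.inr, ?_, ?_,
    ⟨hinl.injOn.bijOn_image, C, fun x _ => hhC (Sum.inl x)⟩,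
    ⟨hinr.injOn.bijOn_image, C, fun x _ => hhC (Sum.inr x)⟩⟩
  · refine eq_univ_of_forall fun y => ?_
    obtain ⟨i | i, rfl⟩ := hh.2 y
    exacts [Or.inl (mem_image_of_mem _ (mem_univ i)), Or.inr (mem_image_of_mem _ (mem_univ i))]
  · rw [disjoint_left]
    rintro _ ⟨a, -, rfl⟩ ⟨b, -, hb⟩
    exact Sum.inr_ne_inl (hh.1 hb)

end

theorem stmt2 {X : Type*} [EMetricSpace X] (hlf : LocallyFiniteEMS X)
    (hna : ¬ Amenable X) : Paradoxical X := by
  obtain ⟨r, hdbl⟩ := exists_two_mul_ncard_le_ncard_nbhd hlf hna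
  obtain ⟨f, hf, hfr⟩ := exists_injective_sum_of_two_mul_ncard_le hlf hdbl
  exact paradoxical_of_injective_sum hf hfr
end

section
/- Let X be a locally finite extended metric space all of whose coarse connected components are infinite. Then X is amenable if and only if X is properly amenable. -/
open Set

/-- The coarse connected component of a point: all points at finite distance. -/
def coarseComponent {X : Type*} [EMetricSpace X] (x : X) : Set X :=
  {y : X | edist x y ≠ ⊤}

section Aux

variable {X : Type*} [EMetricSpace X]

lemma rB_finite (hlf : LocallyFiniteEMS X) {F : Set X} (hF : F.Finite) (R : ℝ) :
    (rBoundary R F).Finite := by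
  apply Set.Finite.subset (Set.Finite.biUnion hF (fun y _ => hlf y R))
  rintro x ⟨⟨y, hy, hxy⟩, -⟩
  exact Set.mem_biUnion hy (by rw [Set.mem_setOf_eq, edist_comm]; exact hxy)

lemma rB_mono {R R' : ℝ} (h : R ≤ R') (F : Set X) : rBoundary R F ⊆ rBoundary R' F := by
  rintro x ⟨⟨y, hy, hxy⟩, ⟨y', hy', hxy'⟩⟩
  exact ⟨⟨y, hy, hxy.trans (ENNReal.ofReal_le_ofReal h)⟩,
    ⟨y', hy', hxy'.trans (ENNReal.ofReal_le_ofReal h)⟩⟩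

lemma rB_union (R : ℝ) (F G : Set X) :
    rBoundary R (F ∪ G) ⊆ rBoundary R F ∪ rBoundary R G := by
  rintro x ⟨⟨y, hy, hxy⟩, ⟨y', hy', hxy'⟩⟩
  rcases hy with hyF | hyG
  · exact Or.inl ⟨⟨y, hyF, hxy⟩, ⟨y', fun h => hy' (Or.inl h), hxy'⟩⟩
  · exact Or.inr ⟨⟨y, hyG, hxy⟩, ⟨y', fun h => hy' (Or.inr h), hxy'⟩⟩

lemma folner_step (hlf : LocallyFiniteEMS X) (ham : Amenable X) {R ε : ℝ}
    (hR : 0 < R) (hε : 0 < ε) (n : ℕ) {R' : ℝ} (hRR : R ≤ R') :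
    (∃ F : Set X, IsFolnerSet R ε F ∧ n ≤ F.ncard) ∨
      (∃ F : Set X, F.Finite ∧ F.Nonempty ∧ rBoundary R' F = ∅) := by
  have hR' : 0 < R' := lt_of_lt_of_le hR hRR
  have hε' : (0:ℝ) < min ε (1/(n+1)) := lt_min hε (by positivity)
  obtain ⟨F, hFfin, hFne, hFb⟩ := ham R' hR' _ hε'
  by_cases hn : n ≤ F.ncard
  · left
    refine ⟨F, ⟨hFfin, hFne, ?_⟩, hn⟩
    calc ((rBoundary R F).ncard : ℝ) ≤ ((rBoundary R' F).ncard : ℝ) := by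
          exact_mod_cast Set.ncard_le_ncard (rB_mono hRR F) (rB_finite hlf hFfin R')
      _ ≤ min ε (1/(n+1)) * F.ncard := hFb
      _ ≤ ε * F.ncard := mul_le_mul_of_nonneg_right (min_le_left _ _) (by positivity)
  · right
    refine ⟨F, hFfin, hFne, ?_⟩
    have h1 : (F.ncard : ℝ) ≤ n := by exact_mod_cast le_of_lt (not_le.mp hn)
    have hlt : ((rBoundary R' F).ncard : ℝ) < 1 := by
      calc ((rBoundary R' F).ncard : ℝ) ≤ min ε (1/(n+1)) * F.ncard := hFb
        _ ≤ (1/(n+1)) * n := by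
            apply mul_le_mul (min_le_right _ _) h1 (by positivity) (by positivity)
        _ < 1 := by
            rw [div_mul_eq_mul_div, one_mul, div_lt_one (by positivity)]
            linarith
    have h0 : (rBoundary R' F).ncard = 0 := by
      have : (rBoundary R' F).ncard < 1 := by exact_mod_cast hlt
      omega
    exact (Set.ncard_eq_zero (rB_finite hlf hFfin R')).mp h0

lemma exists_large_folner (hlf : LocallyFiniteEMS X)
    (hcomp : ∀ x : X, (coarseComponent x).Infinite) (ham : Amenable X) {R ε : ℝ}
    (hR : 0 < R) (hε : 0 < ε) (n : ℕ) :
    ∃ F : Set X, IsFolnerSet R ε F ∧ n ≤ F.ncard := by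
  have key : ∀ k : ℕ, (∃ F : Set X, IsFolnerSet R ε F ∧ n ≤ F.ncard) ∨
      (∃ F : Set X, F.Finite ∧ F.Nonempty ∧ rBoundary R F = ∅ ∧ k ≤ F.ncard) := by
    intro k
    induction k with
    | zero =>
      rcases folner_step hlf ham hR hε n (le_refl R) with h | ⟨F, h1, h2, h3⟩
      · exact Or.inl h
      · exact Or.inr ⟨F, h1, h2, h3, Nat.zero_le _⟩
    | succ k ih =>
      rcases ih with h | ⟨F, hFfin, hFne, hFb, hFk⟩
      · exact Or.inl h
      · have hy : ∀ x ∈ F, ∃ y, y ∉ F ∧ edist x y ≠ ⊤ := by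
          intro x hx
          obtain ⟨y, hy1, hy2⟩ := ((hcomp x).diff hFfin).nonempty
          exact ⟨y, hy2, hy1⟩
        choose! yf hyf1 hyf2 using hy
        obtain ⟨D, hD⟩ := (hFfin.image (fun x => (edist x (yf x)).toReal)).bddAbove
        have hD0 : 0 ≤ D := by
          obtain ⟨x, hx⟩ := hFne
          exact le_trans ENNReal.toReal_nonneg (hD ⟨x, hx, rfl⟩)
        have hRR : R ≤ R + D := by linarith
        have hyR' : ∀ x ∈ F, ∃ y, y ∉ F ∧ edist x y ≤ ENNReal.ofReal (R + D) := by
          intro x hx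
          refine ⟨yf x, hyf1 x hx, ?_⟩
          exact (ENNReal.le_ofReal_iff_toReal_le (hyf2 x hx) (by linarith)).mpr
            (le_trans (hD ⟨x, hx, rfl⟩) (by linarith))
        rcases folner_step hlf ham hR hε n hRR with h | ⟨G, hGfin, hGne, hGb⟩
        · exact Or.inl h
        · have hz : ∃ z ∈ G, z ∉ F := by
            by_contra hc
            push_neg at hc
            obtain ⟨x, hx⟩ := hGne
            obtain ⟨y, hy1, hy2⟩ := hyR' x (hc x hx)
            have hmem : x ∈ rBoundary (R + D) G :=
              ⟨⟨x, hx, by simp [edist_self]⟩, ⟨y, fun hyG => hy1 (hc y hyG), hy2⟩⟩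
            rw [hGb] at hmem
            exact hmem
          obtain ⟨z, hzG, hzF⟩ := hz
          refine Or.inr ⟨F ∪ G, hFfin.union hGfin, hFne.mono Set.subset_union_left, ?_, ?_⟩
          · apply Set.eq_empty_of_subset_empty
            refine subset_trans (rB_union R F G) ?_
            have hGb' : rBoundary R G = ∅ :=
              Set.eq_empty_of_subset_empty (hGb ▸ rB_mono hRR G)
            rw [hFb, hGb']
            simp
          · have h1 : insert z F ⊆ F ∪ G :=
              Set.insert_subset (Or.inr hzG) Set.subset_union_left
            calc k + 1 ≤ F.ncard + 1 := by omega
              _ = (insert z F).ncard := (Set.ncard_insert_of_notMem hzF hFfin).symm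
              _ ≤ (F ∪ G).ncard := Set.ncard_le_ncard h1 (hFfin.union hGfin)
  rcases key n with h | ⟨F, h1, h2, h3, h4⟩
  · exact h
  · refine ⟨F, ⟨h1, h2, ?_⟩, h4⟩
    rw [h3, Set.ncard_empty]
    push_cast
    positivity

end Aux

theorem stmt4 {X : Type*} [EMetricSpace X] [Nonempty X] (hlf : LocallyFiniteEMS X)
    (hcomp : ∀ x : X, (coarseComponent x).Infinite) :
    Amenable X ↔ ProperlyAmenable X := by
  constructor
  · intro ham R hR ε hε A hA
    set N := ⋃ a ∈ A, {x : X | edist a x ≤ ENNReal.ofReal R} with hNdef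
    have hN : N.Finite := hA.biUnion (fun a _ => hlf a R)
    obtain ⟨n, hn⟩ : ∃ n : ℕ, (N.ncard : ℝ) ≤ (ε/2) * n := by
      refine ⟨⌈(N.ncard : ℝ)/(ε/2)⌉₊, ?_⟩
      have hceil := Nat.le_ceil ((N.ncard : ℝ)/(ε/2))
      calc (N.ncard : ℝ) = (ε/2) * ((N.ncard : ℝ)/(ε/2)) := by field_simp
        _ ≤ (ε/2) * (⌈(N.ncard : ℝ)/(ε/2)⌉₊ : ℝ) :=
            mul_le_mul_of_nonneg_left hceil (by positivity)
    obtain ⟨F, ⟨hFfin, hFne, hFb⟩, hFn⟩ :=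
      exists_large_folner hlf hcomp ham hR (half_pos hε) n
    refine ⟨A ∪ F, ⟨hA.union hFfin, hFne.mono Set.subset_union_right, ?_⟩,
      Set.subset_union_left⟩
    have hsub : rBoundary R (A ∪ F) ⊆ N ∪ rBoundary R F := by
      rintro x ⟨⟨y, hy, hxy⟩, ⟨y', hy', hxy'⟩⟩
      rcases hy with hyA | hyF
      · exact Or.inl (Set.mem_biUnion hyA (by rw [Set.mem_setOf_eq, edist_comm]; exact hxy))
      · exact Or.inr ⟨⟨y, hyF, hxy⟩, ⟨y', fun h => hy' (Or.inr h), hxy'⟩⟩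
    have hc' : (N.ncard : ℝ) ≤ (ε/2) * F.ncard :=
      le_trans hn (mul_le_mul_of_nonneg_left (by exact_mod_cast hFn) (by positivity))
    have hmono : (F.ncard : ℝ) ≤ ((A ∪ F).ncard : ℝ) := by
      exact_mod_cast Set.ncard_le_ncard Set.subset_union_right (hA.union hFfin)
    calc ((rBoundary R (A ∪ F)).ncard : ℝ)
        ≤ ((N ∪ rBoundary R F).ncard : ℝ) := by
          exact_mod_cast Set.ncard_le_ncard hsub (hN.union (rB_finite hlf hFfin R))
      _ ≤ (N.ncard : ℝ) + ((rBoundary R F).ncard : ℝ) := by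
          exact_mod_cast Set.ncard_union_le N (rBoundary R F)
      _ ≤ (ε/2) * F.ncard + (ε/2) * F.ncard := add_le_add hc' hFb
      _ = ε * (F.ncard : ℝ) := by ring
      _ ≤ ε * ((A ∪ F).ncard : ℝ) := mul_le_mul_of_nonneg_left hmono (le_of_lt hε)
  · intro hpa R hR ε hε
    obtain ⟨F, hF, -⟩ := hpa R hR ε hε ∅ Set.finite_empty
    exact ⟨F, hF⟩
end

section
/- Let K be a field and A an infinite-dimensional K-algebra. Then A is properly left algebraically amenable if and only if for every ε > 0, every N ∈ ℕ, and every finite subset F ⊆ A there exists a left (F,ε)-Følner subspace W with dim W ≥ N. -/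
/-- `W` is a left `(F, ε)`-Følner subspace: a nonzero finite-dimensional subspace with
`dim(aW + W) ≤ (1+ε)·dim W` for all `a ∈ F`. -/
def IsFolnerSubspace (K : Type*) {A : Type*} [Field K] [NonUnitalRing A] [Module K A]
    [SMulCommClass K A A] [IsScalarTower K A A]
    (F : Finset A) (ε : ℝ) (W : Submodule K A) : Prop :=
  W ≠ ⊥ ∧ FiniteDimensional K W ∧
    ∀ a ∈ F, (Module.finrank K ↥(W.map (LinearMap.mulLeft K a) ⊔ W) : ℝ) ≤
      (1 + ε) * (Module.finrank K ↥W : ℝ)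

/-- Left algebraic amenability. -/
def AlgAmenable (K A : Type*) [Field K] [NonUnitalRing A] [Module K A]
    [SMulCommClass K A A] [IsScalarTower K A A] : Prop :=
  ∀ ε > (0:ℝ), ∀ F : Finset A, ∃ W : Submodule K A, IsFolnerSubspace K F ε W

/-- Proper left algebraic amenability. -/
def ProperlyAlgAmenable (K A : Type*) [Field K] [NonUnitalRing A] [Module K A]
    [SMulCommClass K A A] [IsScalarTower K A A] : Prop :=
  ∀ ε > (0:ℝ), ∀ F : Finset A, ∃ W : Submodule K A,
    IsFolnerSubspace K F ε W ∧ ∀ a ∈ F, a ∈ W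

theorem stmt8 {K A : Type*} [Field K] [NonUnitalRing A] [Module K A]
    [SMulCommClass K A A] [IsScalarTower K A A]
    (hinf : ¬ FiniteDimensional K A) :
    ProperlyAlgAmenable K A ↔
      ∀ ε > (0:ℝ), ∀ N : ℕ, ∀ F : Finset A,
        ∃ W : Submodule K A, IsFolnerSubspace K F ε W ∧ N ≤ Module.finrank K ↥W := by
  classical
  constructor
  · intro h ε hε N F
    -- find N linearly independent elements
    have hrank : (N : Cardinal) ≤ Module.rank K A := by
      have : ¬ Module.rank K A < Cardinal.aleph0 := by
        rwa [FiniteDimensional, ← Module.rank_lt_aleph0_iff] at hinf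
      exact le_trans (Cardinal.nat_lt_aleph0 N).le (not_lt.mp this)
    obtain ⟨S, hScard, hSli⟩ := le_rank_iff_exists_linearIndependent_finset.mp hrank
    obtain ⟨W, ⟨hbot, hfd, hfol⟩, hmem⟩ := h ε hε (F ∪ S)
    refine ⟨W, ⟨hbot, hfd, fun a ha => hfol a (Finset.mem_union_left _ ha)⟩, ?_⟩
    haveI := hfd
    have hSW : Submodule.span K (S : Set A) ≤ W :=
      Submodule.span_le.mpr (fun a ha => hmem a (Finset.mem_union_right _ ha))
    calc N = Module.finrank K ↥(Submodule.span K (S : Set A)) := by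
            rw [finrank_span_finset_eq_card hSli, hScard]
      _ ≤ Module.finrank K ↥W := Submodule.finrank_mono hSW
  · intro h ε hε F
    set N : ℕ := ⌈(4 * (F.card : ℝ)) / ε⌉₊ with hN
    obtain ⟨W, ⟨hbot, hfd, hfol⟩, hNW⟩ := h (ε / 2) (by linarith) N F
    haveI := hfd
    set S : Submodule K A := Submodule.span K (F : Set A) with hS
    refine ⟨W ⊔ S, ⟨?_, inferInstance, ?_⟩, fun a ha => ?_⟩
    · intro hWS
      exact hbot (le_bot_iff.mp (le_trans le_sup_left hWS.le))
    · intro a ha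
      set m := LinearMap.mulLeft K a with hm
      have hmap : (W ⊔ S).map m ⊔ (W ⊔ S) = (W.map m ⊔ W) ⊔ (S.map m ⊔ S) := by
        rw [Submodule.map_sup]
        exact sup_sup_sup_comm _ _ _ _
      rw [hmap]
      have h1 : Module.finrank K ↥((W.map m ⊔ W) ⊔ (S.map m ⊔ S)) ≤
          Module.finrank K ↥(W.map m ⊔ W) + Module.finrank K ↥(S.map m ⊔ S) :=
        Submodule.finrank_add_le_finrank_add_finrank _ _
      have h2 : Module.finrank K ↥(S.map m ⊔ S) ≤
          Module.finrank K ↥(S.map m) + Module.finrank K ↥S :=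
        Submodule.finrank_add_le_finrank_add_finrank _ _
      have h3 : Module.finrank K ↥(S.map m) ≤ Module.finrank K ↥S :=
        Submodule.finrank_map_le _ _
      have h4 : Module.finrank K ↥S ≤ F.card := finrank_span_finset_le_card F
      have h5 : (Module.finrank K ↥(W.map m ⊔ W) : ℝ) ≤
          (1 + ε / 2) * (Module.finrank K ↥W : ℝ) := hfol a ha
      have hWle : Module.finrank K ↥W ≤ Module.finrank K ↥(W ⊔ S) :=
        Submodule.finrank_mono le_sup_left
      have hceil : (4 * (F.card : ℝ)) / ε ≤ (N : ℝ) := Nat.le_ceil _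
      have hNle : (N : ℝ) ≤ (Module.finrank K ↥(W ⊔ S) : ℝ) := by
        exact_mod_cast le_trans hNW hWle
      have hFN : 2 * (F.card : ℝ) ≤ (ε / 2) * N := by
        rw [div_le_iff₀ hε] at hceil
        nlinarith
      have hWle' : (Module.finrank K ↥W : ℝ) ≤ (Module.finrank K ↥(W ⊔ S) : ℝ) := by
        exact_mod_cast hWle
      have hcast : (Module.finrank K ↥((W.map m ⊔ W) ⊔ (S.map m ⊔ S)) : ℝ) ≤
          (Module.finrank K ↥(W.map m ⊔ W) : ℝ) + 2 * (F.card : ℝ) := by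
        have : Module.finrank K ↥((W.map m ⊔ W) ⊔ (S.map m ⊔ S)) ≤
            Module.finrank K ↥(W.map m ⊔ W) + 2 * F.card := by omega
        exact_mod_cast this
      calc (Module.finrank K ↥((W.map m ⊔ W) ⊔ (S.map m ⊔ S)) : ℝ)
          ≤ (Module.finrank K ↥(W.map m ⊔ W) : ℝ) + 2 * (F.card : ℝ) := hcast
        _ ≤ (1 + ε / 2) * (Module.finrank K ↥W : ℝ) + (ε / 2) * N := by linarith
        _ ≤ (1 + ε) * (Module.finrank K ↥(W ⊔ S) : ℝ) := by nlinarith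
    · exact Submodule.mem_sup_right (Submodule.subset_span ha)
end

section
/- Let A be a unital infinite-dimensional K-algebra. Then A is properly left algebraically amenable if and only if for every ε > 0 and every finite F ⊆ A there exists a left (F,ε)-Følner subspace containing the unit 1_A. -/
/-!
If `W` is an `(F ∪ F·F, δ)`-Følner subspace containing `1`, put `W' = W + ∑_{b ∈ F} (bW + W)`.
Then `F ⊆ W'` since `b = b·1 ∈ bW`, and for `a ∈ F` the subspace `aW' + W'` lies in
`W + ∑_{c ∈ C} (cW + W)` with `C = {a} ∪ F ∪ aF ⊆ F ∪ F·F`. Each `cW + W` adds at most `δ·dim W`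
dimensions to `W`, so `dim (aW' + W') ≤ (1 + (2|F| + 1)δ) dim W ≤ (1 + ε) dim W'`
for `δ = ε / (2|F| + 1)`.
-/

open Module Submodule Finset
open scoped Pointwise

section Counting

variable {K V ι : Type*} [DivisionRing K] [AddCommGroup V] [Module K V]

theorem finrank_sup_finset_sup_le (W : Submodule K V) [FiniteDimensional K W] (S : Finset ι)
    (U : ι → Submodule K V) [∀ i, FiniteDimensional K (U i)] {δ : ℝ}
    (hle : ∀ i ∈ S, W ≤ U i)
    (hU : ∀ i ∈ S, (finrank K (U i) : ℝ) ≤ (1 + δ) * finrank K W) :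
    (finrank K ↥(W ⊔ S.sup U) : ℝ) ≤ (1 + #S * δ) * finrank K W := by
  classical
  induction S using Finset.induction_on with
  | empty => rw [Finset.sup_empty, sup_bot_eq]; simp
  | @insert c S hc ih =>
    have ih := ih (fun i hi => hle i (mem_insert_of_mem hi))
      (fun i hi => hU i (mem_insert_of_mem hi))
    have hUc := hU c (mem_insert_self c S)
    have hrw : W ⊔ (insert c S).sup U = U c ⊔ (W ⊔ S.sup U) := by
      rw [sup_insert, ← sup_assoc, ← sup_assoc, sup_comm W (U c)]
    -- With `X = W ⊔ S.sup U`: `W ≤ U c ⊓ X`, so `dim (U c ⊔ X) ≤ dim (U c) + dim X - dim W`.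
    have hW : (finrank K W : ℝ) ≤ finrank K ↥(U c ⊓ (W ⊔ S.sup U)) := by
      exact_mod_cast finrank_mono (le_inf (hle c (mem_insert_self c S)) le_sup_left)
    have hdim : (finrank K ↥(U c ⊔ (W ⊔ S.sup U)) : ℝ) + finrank K ↥(U c ⊓ (W ⊔ S.sup U)) =
        finrank K (U c) + finrank K ↥(W ⊔ S.sup U) := by
      exact_mod_cast finrank_sup_add_finrank_inf_eq (U c) (W ⊔ S.sup U)
    rw [hrw, card_insert_of_notMem hc]
    push_cast
    linarith

end Counting

theorem Finset.card_insert_union_image_le {α : Type*} [DecidableEq α] (F : Finset α) (a : α)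
    (f : α → α) : #(insert a (F ∪ F.image f)) ≤ 2 * #F + 1 :=
  calc #(insert a (F ∪ F.image f))
      ≤ #(F ∪ F.image f) + 1 := card_insert_le _ _
    _ ≤ #F + #(F.image f) + 1 := by gcongr; exact card_union_le _ _
    _ ≤ 2 * #F + 1 := by linarith [card_image_le (s := F) (f := f)]

theorem Finset.insert_union_image_mul_subset {M : Type*} [Mul M] [DecidableEq M]
    {F : Finset M} {a : M} (ha : a ∈ F) : insert a (F ∪ F.image (a * ·)) ⊆ F ∪ F * F := by
  refine insert_subset (mem_union_left _ ha) (union_subset_union le_rfl ?_)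
  rintro _ hc
  obtain ⟨b, hb, rfl⟩ := mem_image.1 hc
  exact mul_mem_mul ha hb

section Folner

variable {K A : Type*} [Field K] [NonUnitalRing A] [Module K A] [SMulCommClass K A A]

def leftTranslateSup (W : Submodule K A) (c : A) : Submodule K A :=
  W.map (LinearMap.mulLeft K c) ⊔ W

instance (W : Submodule K A) [FiniteDimensional K W] (c : A) :
    FiniteDimensional K (leftTranslateSup W c) := by
  unfold leftTranslateSup; infer_instance

theorem le_leftTranslateSup (W : Submodule K A) (c : A) : W ≤ leftTranslateSup W c :=
  le_sup_right

theorem map_mulLeft_le_leftTranslateSup (W : Submodule K A) (c : A) :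
    W.map (LinearMap.mulLeft K c) ≤ leftTranslateSup W c :=
  le_sup_left

theorem map_mulLeft_leftTranslateSup_le (W : Submodule K A) (a b : A) :
    (leftTranslateSup W b).map (LinearMap.mulLeft K a) ≤
      leftTranslateSup W (a * b) ⊔ leftTranslateSup W a := by
  rw [leftTranslateSup, Submodule.map_sup, ← map_comp, ← LinearMap.mulLeft_mul]
  exact sup_le_sup (map_mulLeft_le_leftTranslateSup W _) (map_mulLeft_le_leftTranslateSup W _)

theorem leftTranslateSup_sup_finset_sup_le (W : Submodule K A) {F G : Finset A} {a : A}
    (ha : a ∈ G) (hFG : F ⊆ G) (haF : ∀ b ∈ F, a * b ∈ G) :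
    leftTranslateSup (W ⊔ F.sup (leftTranslateSup W)) a ≤ W ⊔ G.sup (leftTranslateSup W) := by
  have hG : ∀ c ∈ G, leftTranslateSup W c ≤ W ⊔ G.sup (leftTranslateSup W) := fun c hc =>
    le_sup_of_le_right (le_sup (f := leftTranslateSup W) hc)
  refine sup_le ?_ (sup_le_sup_left (sup_mono hFG) W)
  rw [Submodule.map_sup, Finset.sup_eq_iSup, Submodule.map_iSup]
  refine sup_le ((map_mulLeft_le_leftTranslateSup W a).trans (hG a ha)) (iSup_le fun b => ?_)
  rw [Submodule.map_iSup]
  exact iSup_le fun hb => (map_mulLeft_leftTranslateSup_le W a b).trans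
    (sup_le (hG _ (haF b hb)) (hG a ha))

theorem IsFolnerSubspace.mono [IsScalarTower K A A] {F G : Finset A} {ε : ℝ} {W : Submodule K A}
    (hW : IsFolnerSubspace K G ε W) (hFG : F ⊆ G) : IsFolnerSubspace K F ε W :=
  ⟨hW.1, hW.2.1, fun a ha => hW.2.2 a (hFG ha)⟩

theorem IsFolnerSubspace.sup_finset_sup_leftTranslateSup [IsScalarTower K A A] [DecidableEq A]
    {F : Finset A} {δ : ℝ} {W : Submodule K A} (hW : IsFolnerSubspace K (F ∪ F * F) δ W)
    (hδ : 0 ≤ δ) :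
    IsFolnerSubspace K F ((2 * #F + 1) * δ) (W ⊔ F.sup (leftTranslateSup W)) := by
  obtain ⟨hne, hfd, hfol⟩ := hW
  refine ⟨fun hbot => hne (eq_bot_iff.2 (hbot ▸ le_sup_left)), inferInstance, fun a ha => ?_⟩
  set G := insert a (F ∪ F.image (a * ·))
  have hcard : (#G : ℝ) ≤ 2 * #F + 1 := by exact_mod_cast card_insert_union_image_le F a _
  have hleG : leftTranslateSup (W ⊔ F.sup (leftTranslateSup W)) a ≤
      W ⊔ G.sup (leftTranslateSup W) :=
    leftTranslateSup_sup_finset_sup_le W (mem_insert_self _ _)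
      (fun b hb => mem_insert_of_mem (mem_union_left _ hb))
      (fun b hb => mem_insert_of_mem (mem_union_right _ (mem_image_of_mem _ hb)))
  calc (finrank K ↥(leftTranslateSup (W ⊔ F.sup (leftTranslateSup W)) a) : ℝ)
      ≤ finrank K ↥(W ⊔ G.sup (leftTranslateSup W)) := by exact_mod_cast finrank_mono hleG
    _ ≤ (1 + #G * δ) * finrank K W :=
      finrank_sup_finset_sup_le W G _ (fun c _ => le_leftTranslateSup W c)
        (fun c hc => hfol c (insert_union_image_mul_subset ha hc))
    _ ≤ (1 + (2 * #F + 1) * δ) * finrank K ↥(W ⊔ F.sup (leftTranslateSup W)) := by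
      gcongr
      exact finrank_mono le_sup_left

end Folner

theorem mem_sup_finset_sup_leftTranslateSup {K A : Type*} [Field K] [Ring A] [Algebra K A]
    {W : Submodule K A} (hW : (1 : A) ∈ W) {F : Finset A} {a : A} (ha : a ∈ F) :
    a ∈ W ⊔ F.sup (leftTranslateSup W) :=
  le_sup_of_le_right (le_sup (f := leftTranslateSup W) ha)
    (map_mulLeft_le_leftTranslateSup W a ⟨1, hW, mul_one a⟩)

theorem stmt9_general {K A : Type*} [Field K] [Ring A] [Algebra K A] :
    ProperlyAlgAmenable K A ↔
      ∀ ε > (0:ℝ), ∀ F : Finset A,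
        ∃ W : Submodule K A, IsFolnerSubspace K F ε W ∧ (1 : A) ∈ W := by
  constructor
  · intro h ε hε F
    classical
    obtain ⟨W, hW, hF⟩ := h ε hε (insert 1 F)
    exact ⟨W, hW.mono (subset_insert 1 F), hF 1 (mem_insert_self 1 F)⟩
  · intro h ε hε F
    classical
    obtain ⟨W, hW, h1⟩ := h (ε / (2 * #F + 1)) (by positivity) (F ∪ F * F)
    have hW' := hW.sup_finset_sup_leftTranslateSup (by positivity)
    rw [mul_div_cancel₀ _ (by positivity)] at hW'
    exact ⟨_, hW', fun a ha => mem_sup_finset_sup_leftTranslateSup h1 ha⟩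

theorem stmt9 {K A : Type*} [Field K] [Ring A] [Algebra K A]
    (hinf : ¬ FiniteDimensional K A) :
    ProperlyAlgAmenable K A ↔
      ∀ ε > (0:ℝ), ∀ F : Finset A,
        ∃ W : Submodule K A, IsFolnerSubspace K F ε W ∧ (1 : A) ∈ W :=
  stmt9_general
end

section
/- If a K-algebra A is left algebraically amenable then its unitization à is left algebraically amenable. -/
/-! A Følner subspace `W` of `A` for the second components of `F` is, viewed inside `Ã`, a
Følner subspace for `F`: since `(λ, a) * w = λ w + a w`, left multiplication by `(λ, a)` maps `W`
into `aW + W`, and the inclusion `A → Ã` preserves dimensions. -/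

namespace Unitization

theorem mul_inr_eq_inr {R A : Type*} [Semiring R] [NonUnitalNonAssocSemiring A] [Module R A]
    (x : Unitization R A) (a : A) :
    x * (a : Unitization R A) = ((x.fst • a + x.snd * a : A) : Unitization R A) := by
  ext <;> simp

theorem map_mulLeft_map_inrHom_sup_le {R A : Type*} [CommSemiring R] [NonUnitalSemiring A]
    [Module R A] [SMulCommClass R A A] [IsScalarTower R A A]
    (W : Submodule R A) (x : Unitization R A) :
    (W.map (inrHom R R A)).map (LinearMap.mulLeft R x) ⊔ W.map (inrHom R R A) ≤
      (W.map (LinearMap.mulLeft R x.snd) ⊔ W).map (inrHom R R A) := by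
  refine sup_le ?_ (Submodule.map_mono le_sup_right)
  rintro _ ⟨_, ⟨w, hw, rfl⟩, rfl⟩
  refine ⟨x.fst • w + x.snd * w, ?_, (mul_inr_eq_inr x w).symm⟩
  exact add_mem (Submodule.mem_sup_right (W.smul_mem _ hw))
    (Submodule.mem_sup_left ⟨w, hw, rfl⟩)

end Unitization

theorem IsFolnerSubspace.map_inrHom {K A : Type*} [Field K] [NonUnitalRing A] [Module K A]
    [SMulCommClass K A A] [IsScalarTower K A A] {F : Finset (Unitization K A)} {ε : ℝ}
    {G : Finset A} {W : Submodule K A} (hW : IsFolnerSubspace K G ε W) (hFG : ∀ x ∈ F, x.snd ∈ G) :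
    IsFolnerSubspace K F ε (W.map (Unitization.inrHom K K A)) := by
  obtain ⟨hW0, hWfd, hWG⟩ := hW
  set ι := Unitization.inrHom K K A
  have hι : Function.Injective ι := Unitization.inrHom_injective
  have finrank_map (V : Submodule K A) : Module.finrank K (V.map ι) = Module.finrank K V :=
    (V.equivMapOfInjective ι hι).finrank_eq.symm
  refine ⟨fun h ↦ hW0 (Submodule.map_injective_of_injective hι (by rwa [Submodule.map_bot])),
    inferInstance, fun x hx ↦ ?_⟩
  calc (Module.finrank K ↥((W.map ι).map (LinearMap.mulLeft K x) ⊔ W.map ι) : ℝ)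
      ≤ Module.finrank K ↥((W.map (LinearMap.mulLeft K x.snd) ⊔ W).map ι) := by
        exact_mod_cast Submodule.finrank_mono (Unitization.map_mulLeft_map_inrHom_sup_le W x)
    _ ≤ (1 + ε) * Module.finrank K W := by
        rw [finrank_map]
        exact hWG x.snd (hFG x hx)
    _ = (1 + ε) * Module.finrank K ↥(W.map ι) := by
        rw [finrank_map]

theorem stmt11 {K A : Type*} [Field K] [NonUnitalRing A] [Module K A]
    [SMulCommClass K A A] [IsScalarTower K A A]
    (h : AlgAmenable K A) : AlgAmenable K (Unitization K A) := by
  intro ε hε F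
  classical
  obtain ⟨W, hW⟩ := h ε hε (F.image (·.snd))
  exact ⟨_, hW.map_inrHom fun x hx => Finset.mem_image_of_mem _ hx⟩
end

section
/- Let A be an infinite-dimensional K-algebra that is left algebraically amenable but not properly left algebraically amenable. Then there exists a nonzero element a ∈ A such that dim(A·a) < ∞; equivalently, A has a nonzero finite-dimensional left ideal. -/
open Module Submodule

theorem stmt12 {K A : Type*} [Field K] [NonUnitalRing A] [Module K A]
    [SMulCommClass K A A] [IsScalarTower K A A]
    (hinf : ¬ FiniteDimensional K A)
    (ham : AlgAmenable K A) (hnpa : ¬ ProperlyAlgAmenable K A) :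
    ∃ a : A, a ≠ 0 ∧
      FiniteDimensional K ↥((⊤ : Submodule K A).map (LinearMap.mulRight K a)) := by
  classical
  have hnpa' : ∃ ε > (0:ℝ), ∃ F : Finset A, ∀ W : Submodule K A,
      IsFolnerSubspace K F ε W → ∃ a ∈ F, a ∉ W := by
    unfold ProperlyAlgAmenable at hnpa
    push_neg at hnpa
    exact hnpa
  obtain ⟨ε₀, hε₀, F₀, hF₀⟩ := hnpa'
  set c : ℝ := (F₀.card : ℝ) with hc
  -- Step 1: quantitative bound on `(F₀, ε₀/2)`-type Følner subspaces
  have key : ∀ W : Submodule K A, W ≠ ⊥ → FiniteDimensional K W →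
      (∀ a ∈ F₀, (finrank K ↥(W.map (LinearMap.mulLeft K a) ⊔ W) : ℝ) ≤
        (1 + ε₀/2) * (finrank K ↥W : ℝ)) →
      (finrank K ↥W : ℝ) * ε₀ < 4 * c := by
    intro W hWbot hWfd hW
    haveI := hWfd
    set S : Submodule K A := Submodule.span K (F₀ : Set A) with hS
    haveI : FiniteDimensional K S := FiniteDimensional.span_finset K F₀
    set W' : Submodule K A := W ⊔ S with hW'def
    haveI : FiniteDimensional K W' := Submodule.finiteDimensional_sup W S
    have hWle : W ≤ W' := le_sup_left
    have hW'bot : W' ≠ ⊥ := by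
      intro h
      exact hWbot (le_bot_iff.mp (h ▸ hWle))
    have hmem : ∀ a ∈ F₀, a ∈ W' := by
      intro a ha
      exact (le_sup_right : S ≤ W') (Submodule.subset_span (Finset.mem_coe.mpr ha))
    have hnotF : ¬ IsFolnerSubspace K F₀ ε₀ W' := by
      intro h
      obtain ⟨a, haF, haW⟩ := hF₀ W' h
      exact haW (hmem a haF)
    have h3 : ¬ ∀ a ∈ F₀, (finrank K ↥(W'.map (LinearMap.mulLeft K a) ⊔ W') : ℝ) ≤
        (1 + ε₀) * (finrank K ↥W' : ℝ) := fun h => hnotF ⟨hW'bot, inferInstance, h⟩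
    push_neg at h3
    obtain ⟨a, haF, hlt⟩ := h3
    set f : A →ₗ[K] A := LinearMap.mulLeft K a with hf
    haveI : FiniteDimensional K (W.map f) := Module.Finite.map W f
    haveI : FiniteDimensional K (S.map f) := Module.Finite.map S f
    haveI : FiniteDimensional K ↥(W.map f ⊔ W) := Submodule.finiteDimensional_sup _ _
    haveI : FiniteDimensional K ↥(S.map f ⊔ S) := Submodule.finiteDimensional_sup _ _
    haveI : FiniteDimensional K ↥((W.map f ⊔ W) ⊔ (S.map f ⊔ S)) :=
      Submodule.finiteDimensional_sup _ _
    have hsub : W'.map f ⊔ W' ≤ (W.map f ⊔ W) ⊔ (S.map f ⊔ S) := by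
      rw [hW'def, Submodule.map_sup]
      exact sup_le
        (sup_le (le_sup_of_le_left le_sup_left) (le_sup_of_le_right le_sup_left))
        (sup_le (le_sup_of_le_left le_sup_right) (le_sup_of_le_right le_sup_right))
    have h4 : finrank K ↥(W'.map f ⊔ W') ≤
        finrank K ↥(W.map f ⊔ W) + finrank K ↥(S.map f ⊔ S) :=
      le_trans (Submodule.finrank_mono hsub)
        (Submodule.finrank_add_le_finrank_add_finrank _ _)
    have hScard : finrank K S ≤ F₀.card := finrank_span_finset_le_card (R := K) F₀
    have h5 : finrank K ↥(S.map f ⊔ S) ≤ F₀.card + F₀.card :=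
      le_trans (Submodule.finrank_add_le_finrank_add_finrank _ _)
        (Nat.add_le_add (le_trans (Submodule.finrank_map_le f S) hScard) hScard)
    have h6 := hW a haF
    have h7 : finrank K W ≤ finrank K W' := Submodule.finrank_mono hWle
    -- real arithmetic
    have r4 : (finrank K ↥(W'.map f ⊔ W') : ℝ) ≤
        (finrank K ↥(W.map f ⊔ W) : ℝ) + (finrank K ↥(S.map f ⊔ S) : ℝ) := by
      exact_mod_cast h4
    have h5' : finrank K ↥(S.map f ⊔ S) ≤ 2 * F₀.card := by omega
    have r5 : (finrank K ↥(S.map f ⊔ S) : ℝ) ≤ 2 * c := by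
      rw [hc]; exact_mod_cast h5'
    have r7 : (finrank K ↥W : ℝ) ≤ (finrank K ↥W' : ℝ) := by exact_mod_cast h7
    have r0 : (0:ℝ) ≤ (finrank K ↥W : ℝ) := Nat.cast_nonneg _
    nlinarith [hlt, h6, mul_le_mul_of_nonneg_left r7 (le_of_lt hε₀)]
  -- the dimension bound
  set n : ℕ := ⌈4 * c / ε₀⌉₊ with hn
  have keyn : ∀ W : Submodule K A, W ≠ ⊥ → FiniteDimensional K W →
      (∀ a ∈ F₀, (finrank K ↥(W.map (LinearMap.mulLeft K a) ⊔ W) : ℝ) ≤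
        (1 + ε₀/2) * (finrank K ↥W : ℝ)) → finrank K W ≤ n := by
    intro W h1 h2 h3
    have h := key W h1 h2 h3
    have hr : (finrank K ↥W : ℝ) < 4 * c / ε₀ := by
      rw [lt_div_iff₀ hε₀]; linarith
    have : (finrank K ↥W : ℝ) < (n : ℝ) + 1 :=
      lt_of_lt_of_le hr (le_trans (Nat.le_ceil _) (by push_cast; linarith))
    exact_mod_cast Nat.lt_add_one_iff.mp (by exact_mod_cast this)
  -- invariant subspaces
  set Pinv : Finset A → Submodule K A → Prop := fun G V =>
    V ≠ ⊥ ∧ FiniteDimensional K V ∧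
      ∀ a : A, (a ∈ G ∨ a ∈ F₀) → V.map (LinearMap.mulLeft K a) ≤ V with hPinv
  have hinv_rank : ∀ G V, Pinv G V → finrank K V ≤ n := by
    intro G V hV
    obtain ⟨hVb, hVfd, hVinv⟩ := hV
    haveI := hVfd
    apply keyn V hVb hVfd
    intro a ha
    have heq : V.map (LinearMap.mulLeft K a) ⊔ V = V := sup_eq_right.mpr (hVinv a (Or.inr ha))
    rw [heq]
    have h0 : (0:ℝ) ≤ (finrank K ↥V : ℝ) := Nat.cast_nonneg _
    nlinarith
  have hex : ∀ G : Finset A, ∃ V, Pinv G V := by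
    intro G
    have hn1 : (0:ℝ) < (n:ℝ) + 1 := add_pos_of_nonneg_of_pos (Nat.cast_nonneg n) one_pos
    set δ : ℝ := min (ε₀/2) (1/((n:ℝ)+1)) with hδ
    have hδpos : 0 < δ := lt_min (by linarith) (div_pos one_pos hn1)
    obtain ⟨W, hWb, hWfd, hWfol⟩ := ham δ hδpos (G ∪ F₀)
    haveI := hWfd
    have hWn : finrank K W ≤ n := by
      apply keyn W hWb hWfd
      intro a ha
      have h := hWfol a (Finset.mem_union_right G ha)
      have h0 : (0:ℝ) ≤ (finrank K ↥W : ℝ) := Nat.cast_nonneg _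
      have hd : δ ≤ ε₀/2 := min_le_left _ _
      nlinarith
    refine ⟨W, hWb, hWfd, ?_⟩
    intro a ha
    have ha' : a ∈ G ∪ F₀ := by
      rcases ha with h | h
      · exact Finset.mem_union_left _ h
      · exact Finset.mem_union_right _ h
    have h := hWfol a ha'
    have hδ2 : δ ≤ 1/((n:ℝ)+1) := min_le_right _ _
    haveI : FiniteDimensional K (W.map (LinearMap.mulLeft K a)) := Module.Finite.map W _
    haveI : FiniteDimensional K ↥(W.map (LinearMap.mulLeft K a) ⊔ W) :=
      Submodule.finiteDimensional_sup _ _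
    have hlt : (finrank K ↥(W.map (LinearMap.mulLeft K a) ⊔ W) : ℝ) <
        (finrank K ↥W : ℝ) + 1 := by
      have hw0 : (0:ℝ) ≤ (finrank K ↥W : ℝ) := Nat.cast_nonneg _
      have hwn : (finrank K ↥W : ℝ) ≤ (n : ℝ) := by exact_mod_cast hWn
      have hδw : δ * (finrank K ↥W : ℝ) ≤ (1/((n:ℝ)+1)) * (n : ℝ) :=
        mul_le_mul hδ2 hwn hw0 (le_of_lt (div_pos one_pos hn1))
      have hfrac : (1/((n:ℝ)+1)) * (n : ℝ) < 1 := by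
        rw [div_mul_eq_mul_div, one_mul, div_lt_one hn1]
        linarith
      have hexp : (1+δ) * (finrank K ↥W : ℝ) = (finrank K ↥W : ℝ) + δ * (finrank K ↥W : ℝ) := by
        ring
      linarith [h]
    have hle : finrank K ↥(W.map (LinearMap.mulLeft K a) ⊔ W) ≤ finrank K W := by
      have := hlt
      exact_mod_cast Nat.lt_add_one_iff.mp (by exact_mod_cast this)
    have heq : W = W.map (LinearMap.mulLeft K a) ⊔ W :=
      Submodule.eq_of_le_of_finrank_le le_sup_right hle
    have : W.map (LinearMap.mulLeft K a) ≤ W.map (LinearMap.mulLeft K a) ⊔ W := le_sup_left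
    rwa [← heq] at this
  -- maximal invariant subspaces of dimension ≤ n
  set R : Finset A → Set ℕ := fun G => {k | ∃ V, Pinv G V ∧ finrank K V = k} with hR
  have hRne : ∀ G, (R G).Nonempty := by
    intro G
    obtain ⟨V, hV⟩ := hex G
    exact ⟨finrank K V, V, hV, rfl⟩
  have hRbdd : ∀ G, ∀ k ∈ R G, k ≤ n := by
    rintro G k ⟨V, hV, rfl⟩
    exact hinv_rank G V hV
  set d : Finset A → ℕ := fun G => sSup (R G) with hd
  have hdmem : ∀ G, d G ∈ R G := fun G =>
    Nat.sSup_mem (hRne G) ⟨n, fun k hk => hRbdd G k hk⟩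
  have hdle : ∀ G, ∀ k ∈ R G, k ≤ d G := fun G k hk =>
    le_csSup ⟨n, fun j hj => hRbdd G j hj⟩ hk
  choose M hM using hdmem
  have hmax : ∀ G V, Pinv G V → V ≤ M G := by
    intro G V hV
    haveI := hV.2.1
    haveI := (hM G).1.2.1
    by_contra hnle
    have hlt : M G < M G ⊔ V := by
      exact lt_of_le_of_ne le_sup_left fun h => hnle (le_of_le_of_eq le_sup_right h.symm)
    haveI : FiniteDimensional K ↥(M G ⊔ V) := Submodule.finiteDimensional_sup _ _
    have hsupinv : Pinv G (M G ⊔ V) := by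
      refine ⟨?_, inferInstance, ?_⟩
      · intro h
        exact (hM G).1.1 (le_bot_iff.mp (h ▸ (le_sup_left : M G ≤ M G ⊔ V)))
      · intro a ha
        rw [Submodule.map_sup]
        exact sup_le (le_trans ((hM G).1.2.2 a ha) le_sup_left)
          (le_trans (hV.2.2 a ha) le_sup_right)
    have h1 : finrank K ↥(M G ⊔ V) ≤ d G := hdle G _ ⟨_, hsupinv, rfl⟩
    have h2 : finrank K (M G) < finrank K ↥(M G ⊔ V) :=
      Submodule.finrank_lt_finrank_of_lt hlt
    have h3 : finrank K (M G) = d G := (hM G).2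
    omega
  -- minimize the dimension
  have hmin : ∃ G₀ : Finset A, ∀ G : Finset A, d G₀ ≤ d G := by
    have hne : (Set.range d).Nonempty := ⟨d ∅, ⟨∅, rfl⟩⟩
    obtain ⟨G₀, hG₀⟩ := Nat.sInf_mem hne
    exact ⟨G₀, fun G => hG₀ ▸ Nat.sInf_le ⟨G, rfl⟩⟩
  obtain ⟨G₀, hG₀⟩ := hmin
  set N : Submodule K A := M G₀ with hN
  haveI : FiniteDimensional K N := (hM G₀).1.2.1
  have hNall : ∀ b : A, N.map (LinearMap.mulLeft K b) ≤ N := by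
    intro b
    set G₁ : Finset A := insert b G₀ with hG₁
    haveI : FiniteDimensional K (M G₁) := (hM G₁).1.2.1
    have hP : Pinv G₀ (M G₁) := by
      refine ⟨(hM G₁).1.1, (hM G₁).1.2.1, fun a ha => (hM G₁).1.2.2 a ?_⟩
      rcases ha with h | h
      · exact Or.inl (Finset.mem_insert_of_mem h)
      · exact Or.inr h
    have hle : M G₁ ≤ M G₀ := hmax G₀ _ hP
    have hrk : finrank K (M G₀) ≤ finrank K (M G₁) := by
      rw [(hM G₀).2, (hM G₁).2]
      exact hG₀ G₁
    have heq : M G₁ = M G₀ := Submodule.eq_of_le_of_finrank_le hle hrk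
    have hb : (M G₁).map (LinearMap.mulLeft K b) ≤ M G₁ :=
      (hM G₁).1.2.2 b (Or.inl (Finset.mem_insert_self b G₀))
    rw [heq] at hb
    exact hb
  obtain ⟨a, haN, ha0⟩ := Submodule.exists_mem_ne_zero_of_ne_bot (hM G₀).1.1
  refine ⟨a, ha0, ?_⟩
  have hsub : (⊤ : Submodule K A).map (LinearMap.mulRight K a) ≤ N := by
    rintro x ⟨y, -, rfl⟩
    have hmem : (LinearMap.mulRight K a) y ∈ N.map (LinearMap.mulLeft K y) := by
      refine ⟨a, haN, ?_⟩
      rw [LinearMap.mulLeft_apply, LinearMap.mulRight_apply]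
    exact hNall y hmem
  exact Submodule.finiteDimensional_of_le hsub
end

section
/- Let A be a K-algebra without zero-divisors. Then A is left algebraically amenable if and only if it is properly left algebraically amenable. -/
open Module Submodule

section LinearAlgebra

variable {K V : Type*} [DivisionRing K] [AddCommGroup V] [Module K V]

/-- `W.comap (f ∘ₗ W.subtype)` is the kernel of `W → (f W + W) / W`, `w ↦ f w mod W`. -/
theorem two_mul_finrank_le_finrank_map_sup_add_finrank_comap (f : V →ₗ[K] V)
    (W : Submodule K V) [FiniteDimensional K W] :
    2 * finrank K W ≤ finrank K ↥(W.map f ⊔ W) + finrank K ↥(W.comap (f ∘ₗ W.subtype)) := by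
  set T := W.map f ⊔ W
  let g : W →ₗ[K] V ⧸ W := W.mkQ ∘ₗ f ∘ₗ W.subtype
  let q : T →ₗ[K] V ⧸ W := W.mkQ ∘ₗ T.subtype
  have hker_g : LinearMap.ker g = W.comap (f ∘ₗ W.subtype) := by
    simp only [g, LinearMap.ker_comp, ker_mkQ]
  have hker_q : finrank K (LinearMap.ker q) = finrank K W := by
    rw [LinearMap.ker_comp, ker_mkQ]
    exact (comapSubtypeEquivOfLe (le_sup_right : W ≤ T)).finrank_eq
  have hrange : LinearMap.range g ≤ LinearMap.range q := by
    simp only [g, q, LinearMap.range_comp, range_subtype]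
    exact map_mono le_sup_left
  have := finrank_mono hrange
  have := LinearMap.finrank_range_add_finrank_ker g
  have := LinearMap.finrank_range_add_finrank_ker q
  rw [hker_g] at *
  omega

theorem finrank_add_sum_finrank_le_finrank_iInf_add [FiniteDimensional K V] {ι : Type*}
    (s : Finset ι) (U : ι → Submodule K V) :
    finrank K V + ∑ i ∈ s, finrank K (U i) ≤
      finrank K ↥(⨅ i ∈ s, U i) + s.card * finrank K V := by
  classical
  induction s using Finset.induction_on with
  | empty =>
    rw [show (⨅ i ∈ (∅ : Finset ι), U i) = ⊤ by simp, finrank_top]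
    simp
  | @insert a s ha ih =>
    rw [Finset.iInf_insert, Finset.sum_insert ha, Finset.card_insert_of_notMem ha]
    have := finrank_sup_add_finrank_inf_eq (U a) (⨅ i ∈ s, U i)
    have := finrank_le (U a ⊔ ⨅ i ∈ s, U i)
    nlinarith

end LinearAlgebra

theorem card_le_finrank_of_forall_mul_mem {K A : Type*} [DivisionRing K] [NonUnitalRing A]
    [Module K A] [IsScalarTower K A A] [NoZeroDivisors A] {ι : Type*} [Fintype ι]
    {c : ι → A} (hc : LinearIndependent K c) {W : Submodule K A} [FiniteDimensional K W]
    {x : A} (hx : x ≠ 0) (hcx : ∀ i, c i * x ∈ W) : Fintype.card ι ≤ finrank K W := by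
  have hker : LinearMap.ker (LinearMap.mulRight K x) = ⊥ :=
    LinearMap.ker_eq_bot'.mpr fun a ha => (mul_eq_zero.mp ha).resolve_right hx
  have hcx' : LinearIndependent K fun i => c i * x := hc.map' _ hker
  exact (LinearIndependent.of_comp W.subtype (v := fun i => ⟨c i * x, hcx i⟩) hcx')
    |>.fintype_card_le_finrank

section Folner

variable {K A : Type*} [Field K] [NonUnitalRing A] [Module K A]
  [SMulCommClass K A A] [IsScalarTower K A A]

theorem IsFolnerSubspace.mono_s13 {F F' : Finset A} {ε ε' : ℝ} {W : Submodule K A}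
    (h : IsFolnerSubspace K F' ε' W) (hF : F ⊆ F') (hε : ε' ≤ ε) : IsFolnerSubspace K F ε W := by
  obtain ⟨hW, hfd, hfol⟩ := h
  refine ⟨hW, hfd, fun a ha => (hfol a (hF ha)).trans ?_⟩
  gcongr

theorem IsFolnerSubspace.sup {F : Finset A} {ε δ : ℝ} {W : Submodule K A}
    (h : IsFolnerSubspace K F ε W) (S : Submodule K A) [FiniteDimensional K S]
    (hS : 2 * (finrank K S : ℝ) ≤ δ * finrank K W) : IsFolnerSubspace K F (ε + δ) (W ⊔ S) := by
  obtain ⟨hW, hfd, hfol⟩ := h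
  refine ⟨fun h => hW (eq_bot_iff.mpr (le_sup_left.trans_eq h)), inferInstance, fun a ha => ?_⟩
  set f := LinearMap.mulLeft K a
  have hd : (0 : ℝ) < finrank K W := by
    have : Nontrivial W := nontrivial_iff_ne_bot.mpr hW
    exact_mod_cast finrank_pos
  have hε : 0 ≤ ε := by
    have : (finrank K W : ℝ) ≤ finrank K ↥(W.map f ⊔ W) := by
      exact_mod_cast finrank_mono le_sup_right
    nlinarith [hfol a ha]
  have hδ : 0 ≤ δ := by nlinarith [(finrank K S).cast_nonneg (α := ℝ)]
  have hsplit : (W ⊔ S).map f ⊔ (W ⊔ S) = (W.map f ⊔ W) ⊔ (S.map f ⊔ S) := by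
    rw [Submodule.map_sup]
    exact sup_sup_sup_comm _ _ _ _
  have hle : finrank K ↥((W ⊔ S).map f ⊔ (W ⊔ S)) ≤
      finrank K ↥(W.map f ⊔ W) + (finrank K S + finrank K S) := by
    have := finrank_add_le_finrank_add_finrank (W.map f ⊔ W) (S.map f ⊔ S)
    have := finrank_add_le_finrank_add_finrank (S.map f) S
    have := finrank_map_le f S
    rw [hsplit]
    omega
  have hWS : (finrank K W : ℝ) ≤ finrank K ↥(W ⊔ S) := by
    exact_mod_cast finrank_mono le_sup_left
  calc (finrank K ↥((W ⊔ S).map f ⊔ (W ⊔ S)) : ℝ)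
      ≤ finrank K ↥(W.map f ⊔ W) + 2 * finrank K S := by
        push_cast [two_mul]; exact_mod_cast hle
    _ ≤ (1 + (ε + δ)) * finrank K W := by linarith [hfol a ha]
    _ ≤ (1 + (ε + δ)) * finrank K ↥(W ⊔ S) := by gcongr

theorem IsFolnerSubspace.exists_ne_zero_forall_mul_mem {F : Finset A} {ε : ℝ}
    {W : Submodule K A} (h : IsFolnerSubspace K F ε W) (hε : F.card * ε < 1) :
    ∃ x ∈ W, x ≠ 0 ∧ ∀ a ∈ F, a * x ∈ W := by
  obtain ⟨hW, hfd, hfol⟩ := h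
  set d := finrank K W
  let U : A → Submodule K W := fun a => W.comap (LinearMap.mulLeft K a ∘ₗ W.subtype)
  have hd : (0 : ℝ) < d := by
    have : Nontrivial W := nontrivial_iff_ne_bot.mpr hW
    exact_mod_cast finrank_pos
  have hU : ∀ a ∈ F, (1 - ε) * d ≤ finrank K (U a) := fun a ha => by
    have : (2 * d : ℝ) ≤ finrank K ↥(W.map (LinearMap.mulLeft K a) ⊔ W) + finrank K (U a) := by
      exact_mod_cast
        two_mul_finrank_le_finrank_map_sup_add_finrank_comap (LinearMap.mulLeft K a) W
    linarith [hfol a ha]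
  have hsum : (F.card : ℝ) * ((1 - ε) * d) ≤ ∑ a ∈ F, (finrank K (U a) : ℝ) := by
    simpa using Finset.card_nsmul_le_sum F _ _ hU
  have hinf : (d : ℝ) + ∑ a ∈ F, (finrank K (U a) : ℝ) ≤
      finrank K ↥(⨅ a ∈ F, U a) + F.card * d := by
    exact_mod_cast finrank_add_sum_finrank_le_finrank_iInf_add F U
  have hpos : 0 < finrank K ↥(⨅ a ∈ F, U a) := by
    have : (0 : ℝ) < finrank K ↥(⨅ a ∈ F, U a) := by nlinarith
    exact_mod_cast this
  obtain ⟨x, hx, hx0⟩ := exists_mem_ne_zero_of_ne_bot (Submodule.one_le_finrank_iff.mp hpos)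
  simp only [mem_iInf] at hx
  exact ⟨x, x.2, fun h => hx0 (Subtype.ext h), fun a ha => hx a ha⟩

theorem isFolnerSubspace_top [Nontrivial A] [FiniteDimensional K A] (F : Finset A) {ε : ℝ}
    (hε : 0 ≤ ε) : IsFolnerSubspace K F ε ⊤ := by
  refine ⟨top_ne_bot, inferInstance, fun a _ => ?_⟩
  rw [sup_top_eq]
  nlinarith [(finrank K ↥(⊤ : Submodule K A)).cast_nonneg (α := ℝ)]

theorem AlgAmenable.nontrivial (h : AlgAmenable K A) : Nontrivial A := by
  obtain ⟨W, hW, -⟩ := h 1 one_pos ∅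
  obtain ⟨x, -, hx⟩ := exists_mem_ne_zero_of_ne_bot hW
  exact ⟨x, 0, hx⟩

theorem AlgAmenable.exists_isFolnerSubspace_le_finrank [NoZeroDivisors A] (h : AlgAmenable K A)
    (hA : ¬ FiniteDimensional K A) {ε : ℝ} (hε : 0 < ε) (F : Finset A) (n : ℕ) :
    ∃ W : Submodule K A, IsFolnerSubspace K F ε W ∧ n ≤ finrank K W := by
  classical
  have hrank : (n : Cardinal) ≤ Module.rank K A := by
    rw [FiniteDimensional, ← Module.rank_lt_aleph0_iff, not_lt] at hA
    exact Cardinal.natCast_lt_aleph0.le.trans hA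
  obtain ⟨c, hc⟩ := exists_linearIndependent_of_le_rank hrank
  set C := Finset.univ.image c
  set ε' := min ε (1 / (n + 1))
  have hε' : 0 < ε' := lt_min hε (by positivity)
  obtain ⟨W, hW⟩ := h ε' hε' (F ∪ C)
  have hC : (C.card : ℝ) * ε' < 1 := calc
    (C.card : ℝ) * ε' ≤ n * (1 / (n + 1)) := by
      gcongr
      · exact_mod_cast Finset.card_image_le.trans_eq (Finset.card_fin n)
      · exact min_le_right _ _
    _ < 1 := by rw [mul_one_div, div_lt_one (by positivity)]; linarith
  obtain ⟨x, -, hx, hCx⟩ :=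
    (hW.mono_s13 Finset.subset_union_right le_rfl).exists_ne_zero_forall_mul_mem hC
  have : FiniteDimensional K W := hW.2.1
  refine ⟨W, hW.mono_s13 Finset.subset_union_left (min_le_left _ _), ?_⟩
  simpa using card_le_finrank_of_forall_mul_mem hc hx fun i => hCx _ (Finset.mem_image_of_mem c
    (Finset.mem_univ i))

theorem AlgAmenable.properlyAlgAmenable [NoZeroDivisors A] (h : AlgAmenable K A) :
    ProperlyAlgAmenable K A := by
  intro ε hε F
  by_cases hA : FiniteDimensional K A
  · have := h.nontrivial
    exact ⟨⊤, isFolnerSubspace_top F hε.le, fun a _ => mem_top⟩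
  obtain ⟨W, hW, hn⟩ :=
    h.exists_isFolnerSubspace_le_finrank hA (half_pos hε) F ⌈4 * F.card / ε⌉₊
  have hS : 2 * (finrank K (span K (F : Set A)) : ℝ) ≤ ε / 2 * finrank K W := calc
    2 * (finrank K (span K (F : Set A)) : ℝ) ≤ 2 * F.card := by
      gcongr; exact_mod_cast finrank_span_finset_le_card F
    _ = ε / 2 * (4 * F.card / ε) := by field_simp; ring
    _ ≤ ε / 2 * finrank K W := by
      gcongr; exact (Nat.le_ceil _).trans (by exact_mod_cast hn)
  exact ⟨W ⊔ span K F, add_halves ε ▸ hW.sup _ hS, fun a ha => mem_sup_right (subset_span ha)⟩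

theorem ProperlyAlgAmenable.algAmenable (h : ProperlyAlgAmenable K A) : AlgAmenable K A :=
  fun ε hε F => (h ε hε F).imp fun _ => And.left

end Folner

theorem stmt13 {K A : Type*} [Field K] [NonUnitalRing A] [Module K A]
    [SMulCommClass K A A] [IsScalarTower K A A]
    (hnzd : ∀ a b : A, a * b = 0 → a = 0 ∨ b = 0) :
    AlgAmenable K A ↔ ProperlyAlgAmenable K A := by
  have : NoZeroDivisors A := ⟨hnzd _ _⟩
  exact ⟨AlgAmenable.properlyAlgAmenable, ProperlyAlgAmenable.algAmenable⟩
end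

section
/- A K-algebra A is (properly) left algebraically amenable if and only if every countable subset of A is contained in a countably-dimensional subalgebra of A which is (properly) left algebraically amenable. -/
open Submodule Module

section Aux
set_option linter.unusedSectionVars false
variable {K A : Type*} [Field K] [NonUnitalRing A] [Module K A]
    [SMulCommClass K A A] [IsScalarTower K A A]

/-- Inclusion of a non-unital subalgebra as a linear map. -/
def InclL (S : NonUnitalSubalgebra K A) : ↥S →ₗ[K] A :=
  { toFun := fun x => (x : A), map_add' := fun _ _ => rfl, map_smul' := fun _ _ => rfl }

lemma inclL_inj (S : NonUnitalSubalgebra K A) : Function.Injective (InclL S) :=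
  Subtype.val_injective

lemma range_inclL (S : NonUnitalSubalgebra K A) :
    LinearMap.range (InclL S) = S.toSubmodule := by
  ext x
  simp only [LinearMap.mem_range, InclL, LinearMap.coe_mk, AddHom.coe_mk]
  exact ⟨fun ⟨y, hy⟩ => hy ▸ y.2, fun h => ⟨⟨x, h⟩, rfl⟩⟩

lemma finrank_map_inclL (S : NonUnitalSubalgebra K A) (p : Submodule K ↥S) :
    finrank K (p.map (InclL S)) = finrank K p :=
  (LinearEquiv.finrank_eq (Submodule.equivMapOfInjective _ (inclL_inj S) p)).symm

lemma map_inclL_mulLeft (S : NonUnitalSubalgebra K A) (a : ↥S) (p : Submodule K ↥S) :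
    (p.map (LinearMap.mulLeft K a)).map (InclL S)
      = (p.map (InclL S)).map (LinearMap.mulLeft K (a : A)) := by
  rw [← Submodule.map_comp, ← Submodule.map_comp]
  congr 1

lemma map_inclL_eq_bot_iff (S : NonUnitalSubalgebra K A) (p : Submodule K ↥S) :
    p.map (InclL S) = ⊥ ↔ p = ⊥ := by
  constructor
  · intro h
    apply Submodule.map_injective_of_injective (inclL_inj S)
    rw [h, Submodule.map_bot]
  · rintro rfl; exact Submodule.map_bot _

lemma fd_map_inclL (S : NonUnitalSubalgebra K A) (p : Submodule K ↥S)
    [FiniteDimensional K p] : FiniteDimensional K (p.map (InclL S)) :=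
  (Submodule.equivMapOfInjective _ (inclL_inj S) p).finiteDimensional

lemma map_mulLeft_le_of_mem_span {W U : Submodule K A} {s : Set A}
    (hb : ∀ b ∈ s, W.map (LinearMap.mulLeft K b) ≤ U) {a : A}
    (ha : a ∈ span K s) : W.map (LinearMap.mulLeft K a) ≤ U := by
  rintro _ ⟨w, hw, rfl⟩
  simp only [LinearMap.mulLeft_apply]
  induction ha using Submodule.span_induction with
  | mem b hbs => exact hb b hbs ⟨w, hw, rfl⟩
  | zero => simpa using U.zero_mem
  | add x y hx hy ihx ihy => rw [add_mul]; exact U.add_mem ihx ihy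
  | smul c x hx ihx => rw [smul_mul_assoc]; exact U.smul_mem c ihx

lemma sup_folner_bound {W : Submodule K A} [FiniteDimensional K W] {ε' : ℝ}
    (F' : Finset A)
    (hb : ∀ b ∈ F', (finrank K ↥(W.map (LinearMap.mulLeft K b) ⊔ W) : ℝ) ≤
      (1 + ε') * (finrank K ↥W : ℝ)) :
    (finrank K ↥(F'.sup (fun b => W.map (LinearMap.mulLeft K b)) ⊔ W) : ℝ) ≤
      (1 + F'.card * ε') * (finrank K ↥W : ℝ) := by
  classical
  induction F' using Finset.induction_on with
  | empty =>
    rw [Finset.sup_empty, bot_sup_eq, Finset.card_empty]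
    norm_num
  | @insert b F'' hbF ih =>
    have hbb := hb b (Finset.mem_insert_self _ _)
    have ih' := ih (fun c hc => hb c (Finset.mem_insert_of_mem hc))
    set X := W.map (LinearMap.mulLeft K b) ⊔ W with hX
    set Y := F''.sup (fun b => W.map (LinearMap.mulLeft K b)) ⊔ W with hY
    have hXY : (insert b F'').sup (fun b => W.map (LinearMap.mulLeft K b)) ⊔ W = X ⊔ Y := by
      rw [Finset.sup_insert, hX, hY]
      rw [sup_sup_distrib_right]
    rw [hXY]
    haveI : FiniteDimensional K ↥(F''.sup (fun b => W.map (LinearMap.mulLeft K b))) :=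
      Submodule.finiteDimensional_finset_sup _ _
    haveI : FiniteDimensional K X := by rw [hX]; infer_instance
    haveI : FiniteDimensional K Y := by rw [hY]; infer_instance
    have h1 := Submodule.finrank_sup_add_finrank_inf_eq X Y
    have h2 : finrank K ↥W ≤ finrank K ↥(X ⊓ Y) := by
      haveI : FiniteDimensional K ↥(X ⊓ Y) := inferInstance
      exact Submodule.finrank_mono (le_inf le_sup_right le_sup_right)
    have hcard : ((insert b F'').card : ℝ) = (F''.card : ℝ) + 1 := by
      rw [Finset.card_insert_of_notMem hbF]; push_cast; ring
    rw [hcard]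
    have h1' : (finrank K ↥(X ⊔ Y) : ℝ) + (finrank K ↥(X ⊓ Y) : ℝ)
        = (finrank K ↥X : ℝ) + (finrank K ↥Y : ℝ) := by
      have := congrArg (Nat.cast : ℕ → ℝ) h1
      push_cast at this
      linarith
    have h2' : (finrank K ↥W : ℝ) ≤ (finrank K ↥(X ⊓ Y) : ℝ) := by exact_mod_cast h2
    nlinarith [h1', h2', hbb, ih']

lemma folner_of_span {W : Submodule K A} [FiniteDimensional K W] {ε ε' : ℝ}
    (F' : Finset A)
    (hb : ∀ b ∈ F', (finrank K ↥(W.map (LinearMap.mulLeft K b) ⊔ W) : ℝ) ≤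
      (1 + ε') * (finrank K ↥W : ℝ))
    (hcard : (F'.card : ℝ) * ε' ≤ ε) {a : A} (ha : a ∈ span K (↑F' : Set A)) :
    (finrank K ↥(W.map (LinearMap.mulLeft K a) ⊔ W) : ℝ) ≤
      (1 + ε) * (finrank K ↥W : ℝ) := by
  classical
  set U := F'.sup (fun b => W.map (LinearMap.mulLeft K b)) ⊔ W with hU
  haveI : FiniteDimensional K ↥(F'.sup (fun b => W.map (LinearMap.mulLeft K b))) :=
    Submodule.finiteDimensional_finset_sup _ _
  haveI : FiniteDimensional K U := by rw [hU]; infer_instance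
  have hle : W.map (LinearMap.mulLeft K a) ⊔ W ≤ U := by
    refine sup_le ?_ le_sup_right
    refine map_mulLeft_le_of_mem_span (fun b hbmem => ?_) ha
    exact le_trans (Finset.le_sup (f := fun b => W.map (LinearMap.mulLeft K b)) hbmem) le_sup_left
  have h3 : finrank K ↥(W.map (LinearMap.mulLeft K a) ⊔ W) ≤ finrank K ↥U :=
    Submodule.finrank_mono hle
  have h4 := sup_folner_bound F' hb
  have h5 : (1 + (F'.card : ℝ) * ε') * (finrank K ↥W : ℝ) ≤ (1 + ε) * (finrank K ↥W : ℝ) := by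
    apply mul_le_mul_of_nonneg_right (by linarith) (by positivity)
  calc (finrank K ↥(W.map (LinearMap.mulLeft K a) ⊔ W) : ℝ)
      ≤ (finrank K ↥U : ℝ) := by exact_mod_cast h3
    _ ≤ (1 + (F'.card : ℝ) * ε') * (finrank K ↥W : ℝ) := h4
    _ ≤ (1 + ε) * (finrank K ↥W : ℝ) := h5

/-- Transfer a Følner subspace from a subalgebra up to the ambient algebra. -/
lemma folner_up {S : NonUnitalSubalgebra K A} {F'' : Finset ↥S} {ε : ℝ}
    {W' : Submodule K ↥S} (h : IsFolnerSubspace K F'' ε W') (F : Finset A)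
    (hF : ∀ a ∈ F, ∃ a' ∈ F'', (a' : A) = a) :
    IsFolnerSubspace K F ε (W'.map (InclL S)) := by
  obtain ⟨hne, hfd, hcond⟩ := h
  haveI := hfd
  refine ⟨fun hbot => hne ((map_inclL_eq_bot_iff S W').mp hbot), fd_map_inclL S W', ?_⟩
  intro a ha
  obtain ⟨a', ha', rfl⟩ := hF a ha
  rw [← map_inclL_mulLeft, ← Submodule.map_sup, finrank_map_inclL, finrank_map_inclL]
  exact hcond a' ha'

/-- Transfer a Følner subspace contained in a subalgebra down to the subalgebra. -/
lemma folner_down {S : NonUnitalSubalgebra K A} {F'' : Finset ↥S} {ε : ℝ}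
    {W : Submodule K A} (hWS : W ≤ S.toSubmodule) (hne : W ≠ ⊥)
    (hfd : FiniteDimensional K W)
    (hcond : ∀ a' ∈ F'', (finrank K ↥(W.map (LinearMap.mulLeft K (a' : A)) ⊔ W) : ℝ) ≤
      (1 + ε) * (finrank K ↥W : ℝ)) :
    IsFolnerSubspace K F'' ε (W.comap (InclL S)) := by
  have hmap : (W.comap (InclL S)).map (InclL S) = W := by
    rw [Submodule.map_comap_eq, range_inclL, inf_eq_right.mpr hWS]
  haveI : FiniteDimensional K (W.comap (InclL S)) := by
    have e := Submodule.equivMapOfInjective _ (inclL_inj S) (W.comap (InclL S))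
    rw [hmap] at e
    haveI := hfd
    exact e.symm.finiteDimensional
  refine ⟨?_, inferInstance, ?_⟩
  · intro hbot
    apply hne
    rw [← hmap, hbot, Submodule.map_bot]
  · intro a' ha'
    have e1 : finrank K ↥((W.comap (InclL S)).map (LinearMap.mulLeft K a') ⊔ W.comap (InclL S))
        = finrank K ↥(W.map (LinearMap.mulLeft K (a' : A)) ⊔ W) := by
      rw [← finrank_map_inclL S, Submodule.map_sup, map_inclL_mulLeft, hmap]
    have e2 : finrank K ↥(W.comap (InclL S)) = finrank K ↥W := by
      rw [← finrank_map_inclL S, hmap]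
    rw [e1, e2]
    exact hcond a' ha'

end Aux

section Main
variable {K A : Type*} [Field K] [NonUnitalRing A] [Module K A]
    [SMulCommClass K A A] [IsScalarTower K A A]

lemma forward_main (p : Prop)
    (h : ∀ ε > (0:ℝ), ∀ F : Finset A, ∃ W : Submodule K A,
      IsFolnerSubspace K F ε W ∧ (p → ∀ a ∈ F, a ∈ W))
    (C : Set A) (hC : C.Countable) :
    ∃ S : NonUnitalSubalgebra K A, C ⊆ S ∧ Module.rank K ↥S ≤ Cardinal.aleph0 ∧
      ∀ ε > (0:ℝ), ∀ F'' : Finset ↥S, ∃ W' : Submodule K ↥S,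
        IsFolnerSubspace K F'' ε W' ∧ (p → ∀ a ∈ F'', a ∈ W') := by
  classical
  have hεm : ∀ m : ℕ, (0:ℝ) < 1/(m+1) := fun m => by positivity
  choose Wc hWc1 hWc2 using fun (F : Finset A) (m : ℕ) => h (1/(m+1)) (hεm m) F
  have hfg : ∀ (F : Finset A) (m : ℕ), ∃ s : Set A, s.Finite ∧ span K s = Wc F m :=
    fun F m => Submodule.fg_def.mp ((Submodule.fg_iff_finiteDimensional _).mpr (hWc1 F m).2.1)
  choose gen hgenfin hgenspan using hfg
  set step : Set A → Set A := fun T =>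
    (T ∪ Set.image2 (· * ·) T T) ∪ ⋃ (F : Finset A) (_ : ↑F ⊆ T) (m : ℕ), gen F m with hstep
  have hsub : ∀ T : Set A, T ⊆ step T := fun T =>
    Set.Subset.trans Set.subset_union_left Set.subset_union_left
  have hstepc : ∀ T : Set A, T.Countable → (step T).Countable := by
    intro T hT
    refine (hT.union (hT.image2 hT _)).union ?_
    have hFin : {F : Finset A | ↑F ⊆ T}.Countable := by
      have h1 := (Set.countable_setOf_finite_subset hT).preimage
        (Finset.coe_injective (α := A))
      refine h1.mono ?_
      intro F hF
      exact ⟨F.finite_toSet, hF⟩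
    exact hFin.biUnion (fun F _ => Set.countable_iUnion fun m => (hgenfin F m).countable)
  set Tn : ℕ → Set A := fun n => step^[n] C with hTn
  have hTnc : ∀ n, (Tn n).Countable := by
    intro n
    induction n with
    | zero => exact hC
    | succ n ih => simp only [hTn, Function.iterate_succ_apply']; exact hstepc _ ih
  have hTnsucc : ∀ n, Tn n ⊆ Tn (n+1) := by
    intro n
    rw [hTn]
    simp only [Function.iterate_succ_apply']
    exact hsub _
  have hmono : Monotone Tn := monotone_nat_of_le_succ hTnsucc
  set Ttot : Set A := ⋃ n, Tn n with hTtot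
  have hTtotc : Ttot.Countable := Set.countable_iUnion hTnc
  have hmul : ∀ x ∈ Ttot, ∀ y ∈ Ttot, x * y ∈ Ttot := by
    intro x hx y hy
    obtain ⟨i, hi⟩ := Set.mem_iUnion.mp hx
    obtain ⟨j, hj⟩ := Set.mem_iUnion.mp hy
    refine Set.mem_iUnion.mpr ⟨max i j + 1, ?_⟩
    rw [hTn]
    simp only [Function.iterate_succ_apply']
    refine Set.mem_union_left _ (Set.mem_union_right _ ?_)
    exact Set.mem_image2_of_mem (hmono (le_max_left i j) hi) (hmono (le_max_right i j) hj)
  set Sg : Subsemigroup A := ⟨Ttot, fun {a b} ha hb => hmul a ha b hb⟩ with hSg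
  set S : NonUnitalSubalgebra K A := NonUnitalAlgebra.adjoin K Ttot with hS
  have hSsub : S.toSubmodule = span K Ttot := by
    rw [hS, NonUnitalAlgebra.adjoin_eq_span]
    have hcl : Subsemigroup.closure Ttot = Sg := Subsemigroup.closure_eq Sg
    rw [hcl]
    rfl
  have hmemS : ∀ x : A, x ∈ S ↔ x ∈ span K Ttot := by
    intro x
    rw [← hSsub]
    rfl
  refine ⟨S, ?_, ?_, ?_⟩
  · intro x hx
    exact NonUnitalAlgebra.subset_adjoin K (Set.mem_iUnion.mpr ⟨0, hx⟩)
  · have h1 : Module.rank K ↥(span K Ttot) ≤ Cardinal.mk ↑Ttot := rank_span_le Ttot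
    have h2 : Cardinal.mk ↑Ttot ≤ Cardinal.aleph0 := by
      rw [Cardinal.mk_le_aleph0_iff]
      exact hTtotc.to_subtype
    have h3 : Module.rank K ↥(S.toSubmodule) ≤ Cardinal.aleph0 := by
      rw [hSsub]; exact h1.trans h2
    exact h3
  · intro ε hε F''
    -- find a finite set F' ⊆ Ttot spanning all elements of F''
    have hmem : ∀ a' : ↥S, ∃ G : Finset A, ↑G ⊆ Ttot ∧ (a' : A) ∈ span K (↑G : Set A) := by
      intro a'
      have := (hmemS a').mp a'.2
      obtain ⟨G, hG1, hG2⟩ := Submodule.mem_span_finite_of_mem_span this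
      exact ⟨G, hG1, hG2⟩
    choose G hG1 hG2 using hmem
    set F' : Finset A := F''.biUnion G with hF'
    have hF'T : (↑F' : Set A) ⊆ Ttot := by
      intro b hb
      rw [hF'] at hb
      simp only [Finset.coe_biUnion, Set.mem_iUnion, Finset.mem_coe] at hb
      obtain ⟨a', _, hb⟩ := hb
      exact hG1 a' hb
    have hFspan : ∀ a' ∈ F'', (a' : A) ∈ span K (↑F' : Set A) := by
      intro a' ha'
      refine Submodule.span_mono ?_ (hG2 a')
      exact_mod_cast Finset.subset_biUnion_of_mem G ha'
    -- find N with F' ⊆ Tn N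
    set idx : A → ℕ := fun b => if hb : ∃ n, b ∈ Tn n then Nat.find hb else 0 with hidx
    set N : ℕ := F'.sup idx with hN
    have hF'N : (↑F' : Set A) ⊆ Tn N := by
      intro b hb
      have hbT : ∃ n, b ∈ Tn n := Set.mem_iUnion.mp (hF'T hb)
      have h1 : b ∈ Tn (idx b) := by
        rw [hidx]
        simp only [dif_pos hbT]
        exact Nat.find_spec hbT
      exact hmono (Finset.le_sup (f := idx) (Finset.mem_coe.mp hb)) h1
    -- choose m with card * (1/(m+1)) ≤ ε
    obtain ⟨m, hm⟩ := exists_nat_gt ((F'.card : ℝ) / ε)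
    have hcard : (F'.card : ℝ) * (1/(m+1)) ≤ ε := by
      rw [mul_one_div, div_le_iff₀ (by positivity)]
      have h1 : (F'.card : ℝ) / ε < m + 1 := hm.trans (by linarith)
      have h2 : (F'.card : ℝ) < (m + 1) * ε := by
        rw [div_lt_iff₀ hε] at h1
        linarith
      linarith
    -- the Følner subspace
    set W : Submodule K A := Wc F' m with hW
    have hWspan : W ≤ span K Ttot := by
      rw [hW, ← hgenspan F' m]
      apply Submodule.span_mono
      intro x hx
      refine Set.mem_iUnion.mpr ⟨N+1, ?_⟩
      rw [hTn]
      simp only [Function.iterate_succ_apply']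
      refine Set.mem_union_right _ ?_
      simp only [Set.mem_iUnion]
      exact ⟨F', hF'N, m, hx⟩
    have hWS : W ≤ S.toSubmodule := by rw [hSsub]; exact hWspan
    obtain ⟨hne, hfd, hcond⟩ := hWc1 F' m
    haveI := hfd
    refine ⟨W.comap (InclL S), folner_down hWS hne hfd ?_, ?_⟩
    · intro a' ha'
      exact folner_of_span F' hcond hcard (hFspan a' ha')
    · intro hp a' ha'
      have h1 : (a' : A) ∈ W := by
        have h2 : span K (↑F' : Set A) ≤ W :=
          Submodule.span_le.mpr (fun b hb => hWc2 F' m hp b (Finset.mem_coe.mp hb))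
        exact h2 (hFspan a' ha')
      exact Submodule.mem_comap.mpr h1

lemma backward_main (p : Prop)
    (h : ∀ C : Set A, C.Countable → ∃ S : NonUnitalSubalgebra K A, C ⊆ S ∧
      ∀ ε > (0:ℝ), ∀ F'' : Finset ↥S, ∃ W' : Submodule K ↥S,
        IsFolnerSubspace K F'' ε W' ∧ (p → ∀ a ∈ F'', a ∈ W')) :
    ∀ ε > (0:ℝ), ∀ F : Finset A, ∃ W : Submodule K A,
      IsFolnerSubspace K F ε W ∧ (p → ∀ a ∈ F, a ∈ W) := by
  classical
  intro ε hε F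
  obtain ⟨S, hsub, hAm⟩ := h ↑F F.finite_toSet.countable
  set F'' : Finset ↥S := F.attach.image (fun a => (⟨a.1, hsub a.2⟩ : ↥S)) with hF''
  obtain ⟨W', hW', hp⟩ := hAm ε hε F''
  have hF : ∀ a ∈ F, ∃ a' ∈ F'', (a' : A) = a := by
    intro a ha
    refine ⟨⟨a, hsub ha⟩, ?_, rfl⟩
    rw [hF'']
    exact Finset.mem_image.mpr ⟨⟨a, ha⟩, F.mem_attach _, rfl⟩
  refine ⟨W'.map (InclL S), folner_up hW' F hF, ?_⟩
  intro hp' a ha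
  obtain ⟨a', ha', rfl⟩ := hF a ha
  exact Submodule.mem_map.mpr ⟨a', hp hp' a' ha', rfl⟩

end Main

theorem stmt15 {K A : Type*} [Field K] [NonUnitalRing A] [Module K A]
    [SMulCommClass K A A] [IsScalarTower K A A] :
    (AlgAmenable K A ↔
      ∀ C : Set A, C.Countable → ∃ S : NonUnitalSubalgebra K A,
        C ⊆ S ∧ Module.rank K ↥S ≤ Cardinal.aleph0 ∧ AlgAmenable K ↥S) ∧
    (ProperlyAlgAmenable K A ↔
      ∀ C : Set A, C.Countable → ∃ S : NonUnitalSubalgebra K A,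
        C ⊆ S ∧ Module.rank K ↥S ≤ Cardinal.aleph0 ∧ ProperlyAlgAmenable K ↥S) := by
  constructor
  · constructor
    · intro h C hC
      obtain ⟨S, h1, h2, h3⟩ := forward_main (K := K) (A := A) False
        (fun ε hε F => (h ε hε F).imp (fun W hW => ⟨hW, fun hf => hf.elim⟩)) C hC
      exact ⟨S, h1, h2, fun ε hε F => (h3 ε hε F).imp fun W' hW' => hW'.1⟩
    · intro h ε hε F
      obtain ⟨W, hW, _⟩ := backward_main (K := K) (A := A) False
        (fun C hC => (h C hC).imp fun S hS =>
          ⟨hS.1, fun ε hε F'' => (hS.2.2 ε hε F'').imp fun W' hW' =>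
            ⟨hW', fun hf => hf.elim⟩⟩) ε hε F
      exact ⟨W, hW⟩
  · constructor
    · intro h C hC
      obtain ⟨S, h1, h2, h3⟩ := forward_main (K := K) (A := A) True
        (fun ε hε F => (h ε hε F).imp (fun W hW => ⟨hW.1, fun _ => hW.2⟩)) C hC
      exact ⟨S, h1, h2, fun ε hε F => (h3 ε hε F).imp fun W' hW' => ⟨hW'.1, hW'.2 trivial⟩⟩
    · intro h ε hε F
      obtain ⟨W, hW, hWp⟩ := backward_main (K := K) (A := A) True
        (fun C hC => (h C hC).imp fun S hS =>
          ⟨hS.1, fun ε hε F'' => (hS.2.2 ε hε F'').imp fun W' hW' =>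
            ⟨hW'.1, fun _ => hW'.2⟩⟩) ε hε F
      exact ⟨W, hW, hWp trivial⟩
end

section
/- A properly infinite unital K-algebra is not left algebraically amenable. Concretely: if a unital K-algebra A contains elements u, u', v, v' with uu' = vv' = 1 and vu' = uv' = 0, then A is not left algebraically amenable. -/
theorem stmt16 {K A : Type*} [Field K] [Ring A] [Algebra K A]
    (u u' v v' : A) (huu : u * u' = 1) (hvv : v * v' = 1)
    (hvu : v * u' = 0) (huv : u * v' = 0) :
    ¬ AlgAmenable K A := by
  intro h
  classical
  obtain ⟨W, hW0, hWfd, hF⟩ := h (1/4) (by norm_num) ({u', v'} : Finset A)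
  haveI := hWfd
  have hdpos : 0 < Module.finrank K W := by
    haveI : Nontrivial W := Submodule.nontrivial_iff_ne_bot.mpr hW0
    exact Module.finrank_pos
  have hinj_u : Function.Injective (LinearMap.mulLeft K u') := by
    intro x y hxy
    have := congrArg (fun z => u * z) hxy
    simpa [LinearMap.mulLeft_apply, ← mul_assoc, huu] using this
  have hinj_v : Function.Injective (LinearMap.mulLeft K v') := by
    intro x y hxy
    have := congrArg (fun z => v * z) hxy
    simpa [LinearMap.mulLeft_apply, ← mul_assoc, hvv] using this
  set U := W.map (LinearMap.mulLeft K u') with hU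
  set V := W.map (LinearMap.mulLeft K v') with hV
  haveI : FiniteDimensional K U := (W.equivMapOfInjective _ hinj_u).finiteDimensional
  haveI : FiniteDimensional K V := (W.equivMapOfInjective _ hinj_v).finiteDimensional
  have hUd : Module.finrank K U = Module.finrank K W :=
    ((W.equivMapOfInjective _ hinj_u).finrank_eq).symm
  have hVd : Module.finrank K V = Module.finrank K W :=
    ((W.equivMapOfInjective _ hinj_v).finrank_eq).symm
  have hdisj : U ⊓ V = ⊥ := by
    rw [eq_bot_iff]
    intro x hx
    obtain ⟨⟨w1, hw1, h1⟩, ⟨w2, hw2, h2⟩⟩ := hx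
    simp only [LinearMap.mulLeft_apply] at h1 h2
    have hw2z : w2 = 0 := by
      have e1 : v * x = 0 := by rw [← h1, ← mul_assoc, hvu, zero_mul]
      have e2 : v * x = w2 := by rw [← h2, ← mul_assoc, hvv, one_mul]
      rw [e2] at e1; exact e1
    simpa [hw2z] using h2.symm
  -- dimension equations
  have eqU := Submodule.finrank_sup_add_finrank_inf_eq U W
  have eqV := Submodule.finrank_sup_add_finrank_inf_eq V W
  have hsum : Module.finrank K ↥(U ⊓ W) + Module.finrank K ↥(V ⊓ W) ≤ Module.finrank K W := by
    have hinf : (U ⊓ W) ⊓ (V ⊓ W) = ⊥ := by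
      rw [eq_bot_iff]
      intro x hx
      have : x ∈ U ⊓ V := ⟨hx.1.1, hx.2.1⟩
      rw [hdisj] at this
      exact this
    have := Submodule.finrank_sup_add_finrank_inf_eq (U ⊓ W) (V ⊓ W)
    rw [hinf, finrank_bot, add_zero] at this
    rw [← this]
    exact Submodule.finrank_mono (sup_le inf_le_right inf_le_right)
  have hu' := hF u' (by simp)
  have hv' := hF v' (by simp)
  rw [← hU] at hu'
  rw [← hV] at hv'
  have c1 : ((Module.finrank K ↥(U ⊔ W)) : ℝ) + (Module.finrank K ↥(U ⊓ W)) =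
      (Module.finrank K U : ℝ) + (Module.finrank K W : ℝ) := by exact_mod_cast eqU
  have c2 : ((Module.finrank K ↥(V ⊔ W)) : ℝ) + (Module.finrank K ↥(V ⊓ W)) =
      (Module.finrank K V : ℝ) + (Module.finrank K W : ℝ) := by exact_mod_cast eqV
  have c3 : ((Module.finrank K ↥(U ⊓ W)) : ℝ) + (Module.finrank K ↥(V ⊓ W)) ≤
      (Module.finrank K W : ℝ) := by exact_mod_cast hsum
  have hdR : (0:ℝ) < (Module.finrank K W : ℝ) := by exact_mod_cast hdpos
  rw [hUd] at c1
  rw [hVd] at c2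
  linarith
end

section
/- Every unital left algebraically amenable K-algebra A has the Invariant Basis Number property: if Aⁿ ≅ Aᵐ as left A-modules then n = m. -/
/-! An isomorphism `Aⁿ ≅ Aᵐ` provides matrices `M`, `N` over `A` with `N * M = 1`. Take a Følner
subspace `W` for the finite set `F` of entries of `M`, and `V = W + ∑_{a ∈ F} a W`. Since `M` has a
left inverse, `w ↦ M w` embeds `Wᵐ` into `Vⁿ`, while the Følner condition gives
`dim V ≤ (1 + |F| ε) dim W`. Hence `m ≤ n (1 + |F| ε)` for every `ε > 0`, i.e. `m ≤ n`: this is the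
rank condition, which implies invariant basis number. -/

open Module LinearMap Matrix Finset Filter Topology

theorem Submodule.finrank_sup_finset_sup_add_card_mul_le {K V ι : Type*} [DivisionRing K]
    [AddCommGroup V] [Module K V] (W : Submodule K V) [FiniteDimensional K W]
    (f : ι → Submodule K V) [∀ i, FiniteDimensional K (f i)] (s : Finset ι) :
    finrank K ↥(W ⊔ s.sup f) + #s * finrank K W ≤ finrank K W + ∑ i ∈ s, finrank K ↥(f i ⊔ W) := by
  classical
  induction s using Finset.induction_on with
  | empty => rw [Finset.sup_empty, sup_bot_eq]; simp
  | insert a s ha ih =>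
    have hsup : W ⊔ (insert a s).sup f = (f a ⊔ W) ⊔ (W ⊔ s.sup f) := by
      rw [Finset.sup_insert, sup_sup_distrib_left, sup_comm W (f a)]
    have hW : finrank K W ≤ finrank K ↥((f a ⊔ W) ⊓ (W ⊔ s.sup f)) :=
      Submodule.finrank_mono (le_inf le_sup_right le_sup_left)
    have := Submodule.finrank_sup_add_finrank_inf_eq (f a ⊔ W) (W ⊔ s.sup f)
    rw [hsup, Finset.sum_insert ha, Finset.card_insert_of_notMem ha]
    linarith

section Folner

variable {K A : Type*} [Field K] [NonUnitalRing A] [Module K A] [SMulCommClass K A A]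
  [IsScalarTower K A A]

theorem IsFolnerSubspace.finrank_sup_map_mulLeft_le {F : Finset A} {ε : ℝ} {W : Submodule K A}
    (hW : IsFolnerSubspace K F ε W) :
    (finrank K ↥(W ⊔ F.sup fun a => W.map (mulLeft K a)) : ℝ) ≤
      (1 + #F * ε) * finrank K W := by
  obtain ⟨-, _, hgrowth⟩ := hW
  have hsum := Submodule.finrank_sup_finset_sup_add_card_mul_le W
    (fun a => W.map (mulLeft K a)) F
  have hgrowth' : ∑ a ∈ F, (finrank K ↥(W.map (mulLeft K a) ⊔ W) : ℝ) ≤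
      ∑ _a ∈ F, (1 + ε) * finrank K W :=
    Finset.sum_le_sum hgrowth
  rw [Finset.sum_const, nsmul_eq_mul] at hgrowth'
  have hsum' : (finrank K ↥(W ⊔ F.sup fun a => W.map (mulLeft K a)) : ℝ) + #F * finrank K W ≤
      finrank K W + ∑ a ∈ F, (finrank K ↥(W.map (mulLeft K a) ⊔ W) : ℝ) := by
    exact_mod_cast hsum
  linarith

end Folner

section Ring

variable {K A : Type*} [Field K] [Ring A] [Algebra K A]
  {ι κ : Type*} [Fintype ι] [Fintype κ] [DecidableEq κ]

theorem Matrix.card_mul_finrank_le_of_mul_eq_one {M : Matrix ι κ A} {N : Matrix κ ι A}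
    (hNM : N * M = 1) (W V : Submodule K A) [FiniteDimensional K W] [FiniteDimensional K V]
    (hWV : ∀ i j, W.map (mulLeft K (M i j)) ≤ V) :
    Fintype.card κ * finrank K W ≤ Fintype.card ι * finrank K V := by
  have hmem (w : κ → W) (i : ι) : (M *ᵥ fun j => (w j : A)) i ∈ V :=
    Submodule.sum_mem _ fun j _ => hWV i j (Submodule.mem_map_of_mem (w j).2)
  let Φ : (κ → W) →ₗ[K] (ι → V) :=
    { toFun := fun w i => ⟨(M *ᵥ fun j => (w j : A)) i, hmem w i⟩
      map_add' := fun w w' => by ext; simp [mulVec, dotProduct, mul_add, sum_add_distrib]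
      map_smul' := fun c w => by ext; simp [mulVec, dotProduct, smul_sum] }
  have hM : Function.Injective (M *ᵥ · : (κ → A) → ι → A) := fun v v' h => by
    simpa [mulVec_mulVec, hNM] using congrArg (N *ᵥ ·) h
  have hΦ : Function.Injective Φ := fun w w' h => by
    have := hM (funext fun i => congrArg Subtype.val (congrFun h i))
    exact funext fun j => Subtype.ext (congrFun this j)
  simpa [finrank_pi_fintype] using LinearMap.finrank_le_finrank_of_injective hΦ

theorem IsFolnerSubspace.card_le_of_mul_eq_one {F : Finset A} {ε : ℝ} {W : Submodule K A}
    (hW : IsFolnerSubspace K F ε W) {M : Matrix ι κ A} {N : Matrix κ ι A} (hNM : N * M = 1)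
    (hMF : ∀ i j, M i j ∈ F) : (Fintype.card κ : ℝ) ≤ Fintype.card ι * (1 + #F * ε) := by
  have := hW.2.1
  have hWpos : (0 : ℝ) < finrank K W := by
    have := Submodule.nontrivial_iff_ne_bot.mpr hW.1
    exact_mod_cast finrank_pos
  set V := W ⊔ F.sup fun a => W.map (mulLeft K a)
  have hWV (i : ι) (j : κ) : W.map (mulLeft K (M i j)) ≤ V :=
    le_sup_of_le_right <| Finset.le_sup (f := fun a => W.map (mulLeft K a)) (hMF i j)
  refine le_of_mul_le_mul_right ?_ hWpos
  calc (Fintype.card κ : ℝ) * finrank K W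
      ≤ Fintype.card ι * finrank K V := by
        exact_mod_cast Matrix.card_mul_finrank_le_of_mul_eq_one hNM W V hWV
    _ ≤ Fintype.card ι * ((1 + #F * ε) * finrank K W) := by
        gcongr; exact hW.finrank_sup_map_mulLeft_le
    _ = Fintype.card ι * (1 + #F * ε) * finrank K W := by ring

theorem AlgAmenable.card_le_of_mul_eq_one (ham : AlgAmenable K A) {M : Matrix ι κ A}
    {N : Matrix κ ι A} (hNM : N * M = 1) : Fintype.card κ ≤ Fintype.card ι := by
  classical
  set F : Finset A := univ.image fun p : ι × κ => M p.1 p.2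
  have hbound (ε : ℝ) (hε : 0 < ε) : (Fintype.card κ : ℝ) ≤ Fintype.card ι * (1 + #F * ε) :=
    have ⟨_, hW⟩ := ham ε hε F
    hW.card_le_of_mul_eq_one hNM fun i j => mem_image_of_mem _ (mem_univ (i, j))
  have hlim : Tendsto (fun ε : ℝ => (Fintype.card ι : ℝ) * (1 + #F * ε)) (𝓝[>] 0)
      (𝓝 (Fintype.card ι)) := by
    have := (continuous_const.mul (continuous_const.add (continuous_const.mul continuous_id))).tendsto
      (f := fun ε : ℝ => (Fintype.card ι : ℝ) * (1 + #F * ε)) 0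
    simpa using this.mono_left nhdsWithin_le_nhds
  exact_mod_cast ge_of_tendsto hlim (eventually_nhdsWithin_of_forall hbound)

theorem AlgAmenable.rankCondition (ham : AlgAmenable K A) : RankCondition A :=
  rankCondition_iff_matrix.mpr fun _ _ _ _ hNM => by
    simpa using ham.card_le_of_mul_eq_one hNM

end Ring

theorem stmt17 {K A : Type*} [Field K] [Ring A] [Algebra K A]
    (ham : AlgAmenable K A) (n m : ℕ)
    (e : Nonempty ((Fin n → A) ≃ₗ[A] (Fin m → A))) : n = m :=
  have := ham.rankCondition
  eq_of_fin_equiv A e.some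
end
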